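/- arXiv:0911.0274 — 7 statements merged into one kernel-verified Lean document; each statement's English description precedes it below -/
import Mathlib

section
/- Let Q be a self-adjoint contraction on a Hilbert space H (‖Q‖ ≤ 1), and suppose θ ∈ (0, 1/2) and f ∈ H satisfies ‖f‖ = 1, ‖Qf − f‖ ≤ θ, and lim_{k→∞} (1/k) ∑_{i=0}^{k−1} ⟨Q^i f, f⟩ = 0. Then there exists φ ∈ H with ‖(I − Q)φ‖² ≤ 32 θ ⟨φ, (I − Q)φ⟩ and ⟨φ, (I − Q)φ⟩ > 0. -/
open Filter Finset
open scoped RealInnerProductSpace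

/-!
Write `S n = ∑_{i<n} ⟪Qⁱ f, f⟫` and `φ = ∑_{i<n} Qⁱ f`. Then `(1 - Q) φ = f - Qⁿ f` has norm at most `2`,
while self-adjointness gives `⟪φ, (1 - Q) φ⟫ = 2 S n - S (2 n)`. Since `⟪Qⁱ f, f⟫ ≥ 1 - i θ`, the partial
sum `S m` exceeds `1 / (8 θ)` for `m ≈ 1 / (2 θ)`. If `2 S n - S (2 n) < 1 / (8 θ)` held for every `n`,
then `S - 1 / (8 θ)` would at least double from `n` to `2 n`, so `S N / N` would stay bounded away from `0`
along `N = 2ʲ m`, contradicting the vanishing Cesàro mean. Hence some `n` has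
`⟪φ, (1 - Q) φ⟫ ≥ 1 / (8 θ)`, and `‖(1 - Q) φ‖² ≤ 4 = 32 θ / (8 θ)`.
-/

section Doubling

variable {T : ℕ → ℝ}

lemma pow_two_mul_le_of_two_mul_le (hT : ∀ n, 2 * T n ≤ T (2 * n)) (m : ℕ) :
    ∀ j : ℕ, 2 ^ j * T m ≤ T (2 ^ j * m)
  | 0 => by simp
  | j + 1 => by
    have ih := pow_two_mul_le_of_two_mul_le hT m j
    calc 2 ^ (j + 1) * T m = 2 * (2 ^ j * T m) := by ring
      _ ≤ 2 * T (2 ^ j * m) := by gcongr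
      _ ≤ T (2 * (2 ^ j * m)) := hT _
      _ = T (2 ^ (j + 1) * m) := by ring_nf

lemma not_tendsto_div_of_two_mul_le (hT : ∀ n, 2 * T n ≤ T (2 * n)) {m : ℕ} (hm : 0 < m)
    (hTm : 0 < T m) : ¬ Tendsto (fun N : ℕ => T N / N) atTop (nhds 0) := by
  intro hlim
  have hsub : Tendsto (fun j : ℕ => 2 ^ j * m) atTop atTop :=
    tendsto_atTop_mono (fun j => (Nat.lt_two_pow_self).le.trans (Nat.le_mul_of_pos_right _ hm))
      tendsto_id
  have hbound : ∀ j : ℕ, T m / m ≤ T (2 ^ j * m) / ((2 ^ j * m : ℕ) : ℝ) := fun j => by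
    have hj : (0 : ℝ) < 2 ^ j := by positivity
    calc T m / m = 2 ^ j * T m / (2 ^ j * m) := (mul_div_mul_left _ _ hj.ne').symm
      _ ≤ T (2 ^ j * m) / (2 ^ j * m) := by
        gcongr
        exact pow_two_mul_le_of_two_mul_le hT m j
      _ = T (2 ^ j * m) / ((2 ^ j * m : ℕ) : ℝ) := by push_cast; rfl
  have hle : T m / m ≤ 0 := ge_of_tendsto' (hlim.comp hsub) hbound
  have hpos : 0 < T m / m := div_pos hTm (by exact_mod_cast hm)
  linarith

lemma exists_le_two_mul_sub_of_tendsto_div {S : ℕ → ℝ}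
    (hS : Tendsto (fun N : ℕ => S N / N) atTop (nhds 0)) {m : ℕ} (hm : 0 < m) {K : ℝ}
    (hK : K < S m) : ∃ n, K ≤ 2 * S n - S (2 * n) := by
  by_contra! h
  refine not_tendsto_div_of_two_mul_le (T := fun n => S n - K) (fun n => by linarith [h n]) hm
    (sub_pos.2 hK) ?_
  simpa only [sub_div, sub_zero] using hS.sub (tendsto_const_div_atTop_nhds_zero_nat K)

end Doubling

section Contraction

variable {H : Type*} [NormedAddCommGroup H] [InnerProductSpace ℝ H] {Q : H →L[ℝ] H}

lemma norm_pow_apply_le (hQ : ‖Q‖ ≤ 1) (x : H) : ∀ n : ℕ, ‖(Q ^ n) x‖ ≤ ‖x‖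
  | 0 => by simp
  | n + 1 => by
    rw [pow_succ', mul_apply_eq_comp]
    exact (Q.le_of_opNorm_le hQ _).trans ((one_mul _).le.trans (norm_pow_apply_le hQ x n))

lemma norm_pow_apply_sub_self_le (hQ : ‖Q‖ ≤ 1) (x : H) :
    ∀ n : ℕ, ‖(Q ^ n) x - x‖ ≤ n * ‖Q x - x‖
  | 0 => by simp
  | n + 1 => by
    have ih := norm_pow_apply_sub_self_le hQ x n
    have hsplit : (Q ^ (n + 1)) x - x = Q ((Q ^ n) x - x) + (Q x - x) := by
      rw [pow_succ', mul_apply_eq_comp, map_sub]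
      abel
    calc ‖(Q ^ (n + 1)) x - x‖ ≤ ‖Q ((Q ^ n) x - x)‖ + ‖Q x - x‖ := hsplit ▸ norm_add_le _ _
      _ ≤ ‖(Q ^ n) x - x‖ + ‖Q x - x‖ := by
        gcongr
        simpa using Q.le_of_opNorm_le hQ ((Q ^ n) x - x)
      _ ≤ (n + 1 : ℕ) * ‖Q x - x‖ := by rw [Nat.cast_succ]; linarith

lemma one_sub_mul_le_inner_pow_apply (hQ : ‖Q‖ ≤ 1) {f : H} (hf : ‖f‖ = 1) (n : ℕ) :
    1 - n * ‖Q f - f‖ ≤ ⟪(Q ^ n) f, f⟫ := by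
  have hdev : |⟪(Q ^ n) f - f, f⟫| ≤ n * ‖Q f - f‖ :=
    calc |⟪(Q ^ n) f - f, f⟫| ≤ ‖(Q ^ n) f - f‖ * ‖f‖ := abs_real_inner_le_norm _ _
      _ ≤ n * ‖Q f - f‖ := by rw [hf, mul_one]; exact norm_pow_apply_sub_self_le hQ f n
  rw [inner_sub_left, real_inner_self_eq_norm_sq, hf, one_pow] at hdev
  linarith [(abs_le.1 hdev).1]

lemma exists_lt_sum_inner_pow_apply (hQ : ‖Q‖ ≤ 1) {f : H} (hf : ‖f‖ = 1) {θ : ℝ} (hθ : 0 < θ)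
    (hQf : ‖Q f - f‖ ≤ θ) : ∃ m > 0, 1 / (8 * θ) < ∑ i ∈ range m, ⟪(Q ^ i) f, f⟫ := by
  set m := ⌈1 / (2 * θ)⌉₊
  have hm : 1 / (2 * θ) ≤ m := Nat.le_ceil _
  have hhalf : ∀ i ∈ range m, (1 / 2 : ℝ) ≤ ⟪(Q ^ i) f, f⟫ := fun i hi => by
    have hi : (i : ℝ) < 1 / (2 * θ) := Nat.lt_ceil.1 (mem_range.1 hi)
    have : (i : ℝ) * θ < 1 / 2 := by
      rw [lt_div_iff₀ (by positivity)] at hi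
      linarith
    have := one_sub_mul_le_inner_pow_apply hQ hf i
    nlinarith [(i.cast_nonneg : (0 : ℝ) ≤ i)]
  refine ⟨m, Nat.ceil_pos.2 (by positivity), ?_⟩
  calc 1 / (8 * θ) < 1 / (2 * θ) / 2 := by
        rw [div_div, div_lt_div_iff_of_pos_left one_pos (by positivity) (by positivity)]
        linarith
    _ ≤ m * (1 / 2) := by linarith
    _ ≤ ∑ i ∈ range m, ⟪(Q ^ i) f, f⟫ := by
        simpa using card_nsmul_le_sum (range m) _ _ hhalf

lemma one_sub_apply_geom_sum_apply (f : H) (n : ℕ) :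
    (1 - Q) ((∑ i ∈ range n, Q ^ i) f) = f - (Q ^ n) f := by
  rw [← mul_apply_eq_comp, mul_neg_geom_sum, sub_apply, one_apply_eq_self]

lemma inner_geom_sum_apply_one_sub_apply (hQ : (Q : H →ₗ[ℝ] H).IsSymmetric) (f : H) (n : ℕ) :
    ⟪(∑ i ∈ range n, Q ^ i) f, (1 - Q) ((∑ i ∈ range n, Q ^ i) f)⟫ =
      2 * ∑ i ∈ range n, ⟪(Q ^ i) f, f⟫ - ∑ i ∈ range (2 * n), ⟪(Q ^ i) f, f⟫ := by
  have hshift : ∀ i, ⟪(Q ^ i) f, (Q ^ n) f⟫ = ⟪(Q ^ (n + i)) f, f⟫ := fun i => by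
    rw [pow_add, mul_apply_eq_comp]
    have := hQ.pow n ((Q ^ i) f) f
    rw [← ContinuousLinearMap.toLinearMap_pow] at this
    exact this.symm
  rw [one_sub_apply_geom_sum_apply, inner_sub_right, _root_.sum_apply, sum_inner,
    sum_inner, two_mul n, sum_range_add]
  simp only [hshift]
  ring
end Contraction

theorem stmt0 {H : Type*} [NormedAddCommGroup H] [InnerProductSpace ℝ H] [CompleteSpace H]
    (Q : H →L[ℝ] H) (hQsa : IsSelfAdjoint Q) (hQnorm : ‖Q‖ ≤ 1)
    (θ : ℝ) (hθ : θ ∈ Set.Ioo (0 : ℝ) (1/2))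
    (f : H) (hf : ‖f‖ = 1) (hQf : ‖Q f - f‖ ≤ θ)
    (hlim : Tendsto (fun k : ℕ => (1 / (k : ℝ)) * ∑ i ∈ Finset.range k, ⟪(Q ^ i) f, f⟫)
      atTop (nhds 0)) :
    ∃ φ : H, ‖(1 - Q) φ‖ ^ 2 ≤ 32 * θ * ⟪φ, (1 - Q) φ⟫ ∧ 0 < ⟪φ, (1 - Q) φ⟫ := by
  have hθ0 : 0 < θ := hθ.1
  obtain ⟨m, hm, hSm⟩ := exists_lt_sum_inner_pow_apply hQnorm hf hθ0 hQf
  obtain ⟨n, hn⟩ := exists_le_two_mul_sub_of_tendsto_div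
    (by simpa only [one_div_mul_eq_div] using hlim) hm hSm
  set φ := (∑ i ∈ range n, Q ^ i) f
  have hφ : 1 / (8 * θ) ≤ ⟪φ, (1 - Q) φ⟫ := by
    rwa [inner_geom_sum_apply_one_sub_apply hQsa.isSymmetric]
  have hnorm : ‖(1 - Q) φ‖ ≤ 2 := by
    rw [one_sub_apply_geom_sum_apply]
    linarith [norm_sub_le f ((Q ^ n) f), norm_pow_apply_le hQnorm f n]
  refine ⟨φ, ?_, lt_of_lt_of_le (by positivity) hφ⟩
  calc ‖(1 - Q) φ‖ ^ 2 ≤ 2 ^ 2 := by gcongr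
    _ = 32 * θ * (1 / (8 * θ)) := by field_simp; norm_num
    _ ≤ 32 * θ * ⟪φ, (1 - Q) φ⟫ := by gcongr
end

section
/- Let P be a self-adjoint contraction on a Hilbert space and ψ ∈ H. Then for every i ≥ 0, |⟨ψ, (I−P)P^i ψ⟩ − ⟨ψ, (I−P)P^{i+1} ψ⟩| ≤ ‖(I−P)ψ‖², and consequently ∑_{i=0}^{t−1} ⟨ψ, (I−P)P^i ψ⟩ ≥ t⟨ψ, (I−P)ψ⟩ − (t²/2)‖(I−P)ψ‖². -/
open Finset
open scoped RealInnerProductSpace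

/-! Since `P` is symmetric, consecutive terms differ by `⟪(1 - P) ψ, Pⁱ (1 - P) ψ⟫`, which is
at most `‖(1 - P) ψ‖²` because `P` is a contraction. Hence the `i`-th term is at least
`⟪ψ, (1 - P) ψ⟫ - i ‖(1 - P) ψ‖²`, and summing over `i < t` gives the second bound. -/

lemma sub_nat_mul_le_of_sub_succ_le {a : ℕ → ℝ} {c : ℝ} (h : ∀ i, a i - a (i + 1) ≤ c)
    (i : ℕ) : a 0 - i * c ≤ a i := by
  induction i with
  | zero => simp
  | succ n ih => push_cast; linarith [h n]

lemma nat_mul_sub_sq_div_two_mul_le_sum_range {a : ℕ → ℝ} {c : ℝ} (hc : 0 ≤ c)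
    (h : ∀ i, a i - a (i + 1) ≤ c) (t : ℕ) :
    t * a 0 - t ^ 2 / 2 * c ≤ ∑ i ∈ range t, a i := by
  induction t with
  | zero => simp
  | succ n ih =>
    rw [sum_range_succ]
    push_cast
    linarith [sub_nat_mul_le_of_sub_succ_le h n]

namespace ContinuousLinearMap

lemma norm_pow_apply_le_of_norm_le_one {𝕜 E : Type*} [NontriviallyNormedField 𝕜]
    [SeminormedAddCommGroup E] [NormedSpace 𝕜 E] {T : E →L[𝕜] E} (hT : ‖T‖ ≤ 1) (n : ℕ) (x : E) :
    ‖(T ^ n) x‖ ≤ ‖x‖ := by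
  induction n with
  | zero => simp
  | succ n ih =>
    rw [pow_succ', mul_apply_eq_comp]
    calc ‖T ((T ^ n) x)‖ ≤ 1 * ‖(T ^ n) x‖ := T.le_of_opNorm_le hT _
      _ ≤ ‖x‖ := by rwa [one_mul]

variable {𝕜 E : Type*} [RCLike 𝕜] [NormedAddCommGroup E] [InnerProductSpace 𝕜 E]

lemma inner_one_sub_apply_of_isSymmetric {P : E →L[𝕜] E} (hP : (P : E →ₗ[𝕜] E).IsSymmetric)
    (x y : E) : inner 𝕜 x ((1 - P) y) = inner 𝕜 ((1 - P) x) y := by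
  simp only [sub_apply, one_apply_eq_self, inner_sub_left, inner_sub_right]
  exact congrArg _ (hP x y).symm

lemma inner_one_sub_pow_sub_inner_one_sub_pow_succ {P : E →L[𝕜] E}
    (hP : (P : E →ₗ[𝕜] E).IsSymmetric) (ψ : E) (i : ℕ) :
    inner 𝕜 ψ ((1 - P) ((P ^ i) ψ)) - inner 𝕜 ψ ((1 - P) ((P ^ (i + 1)) ψ))
      = inner 𝕜 ((1 - P) ψ) ((P ^ i) ((1 - P) ψ)) := by
  rw [← inner_sub_right, ← map_sub, inner_one_sub_apply_of_isSymmetric hP, pow_succ,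
    mul_apply_eq_comp, ← map_sub, sub_apply, one_apply_eq_self]

end ContinuousLinearMap

lemma abs_real_inner_pow_apply_self_le {E : Type*} [NormedAddCommGroup E]
    [InnerProductSpace ℝ E] {T : E →L[ℝ] E} (hT : ‖T‖ ≤ 1) (n : ℕ) (x : E) :
    |⟪x, (T ^ n) x⟫| ≤ ‖x‖ ^ 2 :=
  calc |⟪x, (T ^ n) x⟫| ≤ ‖x‖ * ‖(T ^ n) x‖ := abs_real_inner_le_norm _ _
    _ ≤ ‖x‖ * ‖x‖ := by gcongr; exact T.norm_pow_apply_le_of_norm_le_one hT n x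
    _ = ‖x‖ ^ 2 := (sq _).symm

theorem stmt4 {H : Type*} [NormedAddCommGroup H] [InnerProductSpace ℝ H] [CompleteSpace H]
    (P : H →L[ℝ] H) (hPsa : IsSelfAdjoint P) (hPnorm : ‖P‖ ≤ 1) (ψ : H) :
    (∀ i : ℕ,
        |⟪ψ, (1 - P) ((P ^ i) ψ)⟫ - ⟪ψ, (1 - P) ((P ^ (i + 1)) ψ)⟫| ≤ ‖(1 - P) ψ‖ ^ 2) ∧
    ∀ t : ℕ, 1 ≤ t →
      (t : ℝ) * ⟪ψ, (1 - P) ψ⟫ - (t : ℝ) ^ 2 / 2 * ‖(1 - P) ψ‖ ^ 2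
        ≤ ∑ i ∈ Finset.range t, ⟪ψ, (1 - P) ((P ^ i) ψ)⟫ := by
  have hstep : ∀ i : ℕ,
      |⟪ψ, (1 - P) ((P ^ i) ψ)⟫ - ⟪ψ, (1 - P) ((P ^ (i + 1)) ψ)⟫| ≤ ‖(1 - P) ψ‖ ^ 2 := by
    intro i
    rw [ContinuousLinearMap.inner_one_sub_pow_sub_inner_one_sub_pow_succ hPsa.isSymmetric]
    exact abs_real_inner_pow_apply_self_le hPnorm i _
  refine ⟨hstep, fun t _ => ?_⟩
  have hsum := nat_mul_sub_sq_div_two_mul_le_sum_range (sq_nonneg ‖(1 - P) ψ‖)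
    (fun i => (abs_le.mp (hstep i)).2) t
  rwa [pow_zero, one_apply_eq_self] at hsum
end

section
/- Let P be the transition matrix of the simple random walk on a finite connected vertex-transitive d-regular graph G with second-largest eigenvalue λ < 1. Then for every t ≥ 0, E[dist(X_0, X_t)²] ≥ (1/d)(1 + λ + λ² + ⋯ + λ^{t−1}). In particular, E[dist(X_0, X_t)²] ≥ t/(2d) for t ≤ (1−λ)^{−1}. -/
/-!
Let `ψ` be a `λ`-eigenfunction of `P` and map `V` into `ℓ²(Aut G)` by `F x = (ψ (g x))_g`.
Because `F` is equivariant and `Aut G` is transitive, `e t := E ‖F X₀ - F X_t‖²` does not depend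
on `X₀`; summing over `X₀` and applying the eigenvalue equation to every `ψ ∘ g` gives
`|V| e t = 2 |Aut G| (1 - λ^t) ‖ψ‖²`, i.e. `e t = (1 + λ + ⋯ + λ^(t-1)) e 1`, and `e 1 > 0` since
`λ < 1`. An edge has weight `1/d` in `e 1`, so `F` moves by at most `√(d e 1)` along an edge and
`‖F x - F y‖² ≤ d e 1 dist(x, y)²`; hence `e t ≤ d e 1 E[dist(X₀, X_t)²]`. The second bound
follows from Bernoulli's inequality `λ^j ≥ 1 - j (1 - λ)`.
-/

open Finset Matrix

lemma dist_le_mul_length_of_adj_le {V α : Type*} [PseudoMetricSpace α] {G : SimpleGraph V}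
    {F : V → α} {L : ℝ} (hF : ∀ x y, G.Adj x y → dist (F x) (F y) ≤ L) {x y : V}
    (p : G.Walk x y) : dist (F x) (F y) ≤ L * p.length := by
  induction p with
  | nil => simp
  | @cons u v w huv p ih =>
    calc dist (F u) (F w) ≤ dist (F u) (F v) + dist (F v) (F w) := dist_triangle _ _ _
      _ ≤ L + L * p.length := add_le_add (hF u v huv) ih
      _ = L * (p.cons huv).length := by rw [SimpleGraph.Walk.length_cons]; push_cast; ring

lemma dist_le_mul_dist_of_adj_le {V α : Type*} [PseudoMetricSpace α]
    {G : SimpleGraph V} {F : V → α} {L : ℝ} (hG : G.Connected)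
    (hF : ∀ x y, G.Adj x y → dist (F x) (F y) ≤ L) (x y : V) :
    dist (F x) (F y) ≤ L * G.dist x y := by
  obtain ⟨p, hp⟩ := hG.exists_walk_length_eq_dist x y
  simpa [hp] using dist_le_mul_length_of_adj_le hF p

lemma half_le_geom_sum {lam : ℝ} {t : ℕ} (ht : t * (1 - lam) ≤ 1) :
    (t : ℝ) / 2 ≤ ∑ j ∈ range t, lam ^ j := by
  rcases t.eq_zero_or_pos with rfl | htpos
  · simp
  have htR : (1 : ℝ) ≤ t := by exact_mod_cast htpos
  have hbernoulli (j : ℕ) : 1 + j * (lam - 1) ≤ lam ^ j := by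
    simpa using one_add_mul_le_pow (a := lam - 1) (by nlinarith) j
  have hgauss (n : ℕ) : ∑ j ∈ range n, (j : ℝ) * 2 = n * (n - 1) := by
    induction n with
    | zero => simp
    | succ n ih => rw [sum_range_succ, ih]; push_cast; ring
  calc (t : ℝ) / 2 ≤ t + (lam - 1) * (t * (t - 1) / 2) := by nlinarith
    _ = ∑ j ∈ range t, (1 + j * (lam - 1)) := by
      rw [sum_add_distrib, ← sum_mul, ← hgauss, ← sum_mul]; simp; ring
    _ ≤ ∑ j ∈ range t, lam ^ j := sum_le_sum fun j _ => hbernoulli j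

namespace Matrix

variable {V : Type*} [Fintype V]

lemma sum_sum_mul_sub_sq_of_mulVec_eq_smul {R : Type*} [CommRing R] {M : Matrix V V R}
    {f : V → R} {c : R}
    (hrow : ∀ x, ∑ y, M x y = 1) (hcol : ∀ y, ∑ x, M x y = 1) (hf : M *ᵥ f = c • f) :
    ∑ x, ∑ y, M x y * (f x - f y) ^ 2 = 2 * (1 - c) * ∑ x, f x ^ 2 := by
  have hrow' : ∑ x, ∑ y, M x y * f x ^ 2 = ∑ x, f x ^ 2 := by
    simp only [← sum_mul, hrow, one_mul]
  have hcol' : ∑ x, ∑ y, M x y * f y ^ 2 = ∑ y, f y ^ 2 := by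
    rw [sum_comm]; simp only [← sum_mul, hcol, one_mul]
  have hcross : ∑ x, ∑ y, M x y * (f x * f y) = c * ∑ x, f x ^ 2 := by
    have (x : V) : ∑ y, M x y * f y = c * f x := congrFun hf x
    simp_rw [mul_left_comm _ (f _), ← mul_sum, this, mul_sum]
    exact sum_congr rfl fun x _ => by ring
  calc ∑ x, ∑ y, M x y * (f x - f y) ^ 2
      = ∑ x, ∑ y, M x y * f x ^ 2 + ∑ x, ∑ y, M x y * f y ^ 2
        - 2 * ∑ x, ∑ y, M x y * (f x * f y) := by
        simp only [mul_sum, ← sum_add_distrib, ← sum_sub_distrib]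
        exact sum_congr rfl fun x _ => sum_congr rfl fun y _ => by ring
    _ = 2 * (1 - c) * ∑ x, f x ^ 2 := by rw [hrow', hcol', hcross]; ring

lemma pow_mulVec_eq_smul {R : Type*} [CommSemiring R] [DecidableEq V] {M : Matrix V V R}
    {f : V → R} {c : R}
    (hf : M *ᵥ f = c • f) (t : ℕ) : (M ^ t) *ᵥ f = c ^ t • f := by
  induction t with
  | zero => simp
  | succ t ih => rw [pow_succ', ← mulVec_mulVec, ih, mulVec_smul, hf, smul_smul, pow_succ]

variable {Γ : Type*} [Group Γ] [MulAction Γ V]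

lemma pow_apply_smul_smul {R : Type*} [Semiring R] [DecidableEq V] {M : Matrix V V R}
    (hM : ∀ (g : Γ) x y, M (g • x) (g • y) = M x y) (t : ℕ) (g : Γ) (x y : V) :
    (M ^ t) (g • x) (g • y) = (M ^ t) x y := by
  have hinv : reindex (MulAction.toPerm g).symm (MulAction.toPerm g).symm M = M := by
    ext x y; exact hM g x y
  have := congrFun₂ (map_pow (reindexRingEquiv R (MulAction.toPerm g).symm) M t) x y
  simpa [hinv] using this

lemma mulVec_comp_smul {R : Type*} [NonUnitalNonAssocSemiring R] {M : Matrix V V R}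
    (hM : ∀ (g : Γ) x y, M (g • x) (g • y) = M x y) (f : V → R) (g : Γ) :
    M *ᵥ (fun x => f (g • x)) = fun x => (M *ᵥ f) (g • x) := by
  have hinv : M.submatrix (MulAction.toPerm g) (MulAction.toPerm g) = M := by
    ext x y; exact hM g x y
  conv_lhs => rw [← hinv, submatrix_mulVec_equiv]
  ext x
  simp [Function.comp_def]

end Matrix

section OrbitEmbedding

variable (Γ : Type*) {V : Type*} [Group Γ] [Fintype Γ] [MulAction Γ V]

def orbitEmbedding (ψ : V → ℝ) (x : V) : EuclideanSpace ℝ Γ :=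
  WithLp.toLp 2 fun g => ψ (g • x)

variable {Γ}

lemma dist_orbitEmbedding_sq (ψ : V → ℝ) (x y : V) :
    dist (orbitEmbedding Γ ψ x) (orbitEmbedding Γ ψ y) ^ 2 =
      ∑ g : Γ, (ψ (g • x) - ψ (g • y)) ^ 2 := by
  rw [EuclideanSpace.dist_eq, Real.sq_sqrt (by positivity)]
  simp [orbitEmbedding, Real.dist_eq, sq_abs]

lemma dist_orbitEmbedding_smul (ψ : V → ℝ) (h : Γ) (x y : V) :
    dist (orbitEmbedding Γ ψ (h • x)) (orbitEmbedding Γ ψ (h • y)) =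
      dist (orbitEmbedding Γ ψ x) (orbitEmbedding Γ ψ y) := by
  rw [← sq_eq_sq₀ dist_nonneg dist_nonneg, dist_orbitEmbedding_sq, dist_orbitEmbedding_sq]
  exact Fintype.sum_equiv (Equiv.mulRight h) _ _ fun g => by simp [mul_smul]

end OrbitEmbedding

section MeanSqDisplacement

variable {V α : Type*} [Fintype V] [PseudoMetricSpace α]

def meanSqDisplacement (M : Matrix V V ℝ) (F : V → α) (x : V) : ℝ :=
  ∑ y, M x y * dist (F x) (F y) ^ 2

lemma mul_dist_sq_le_meanSqDisplacement {M : Matrix V V ℝ} (hM : ∀ x y, 0 ≤ M x y) (F : V → α)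
    (x y : V) : M x y * dist (F x) (F y) ^ 2 ≤ meanSqDisplacement M F x :=
  single_le_sum (f := fun y => M x y * dist (F x) (F y) ^ 2)
    (fun y _ => mul_nonneg (hM x y) (sq_nonneg _)) (mem_univ y)

lemma meanSqDisplacement_le {M : Matrix V V ℝ} (hM : ∀ x y, 0 ≤ M x y) {F : V → α} {L : ℝ}
    {D : V → V → ℝ} (hF : ∀ x y, dist (F x) (F y) ≤ L * D x y) (x : V) :
    meanSqDisplacement M F x ≤ L ^ 2 * ∑ y, M x y * D x y ^ 2 := by
  rw [mul_sum]
  refine sum_le_sum fun y _ => ?_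
  calc M x y * dist (F x) (F y) ^ 2 ≤ M x y * (L * D x y) ^ 2 :=
        mul_le_mul_of_nonneg_left (pow_le_pow_left₀ dist_nonneg (hF x y) 2) (hM x y)
    _ = L ^ 2 * (M x y * D x y ^ 2) := by ring

variable {Γ : Type*} [Group Γ] [MulAction Γ V]

lemma meanSqDisplacement_eq_of_isPretransitive [MulAction.IsPretransitive Γ V]
    {M : Matrix V V ℝ} (hM : ∀ (g : Γ) x y, M (g • x) (g • y) = M x y) {F : V → α}
    (hF : ∀ (g : Γ) x y, dist (F (g • x)) (F (g • y)) = dist (F x) (F y)) (x y : V) :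
    meanSqDisplacement M F x = meanSqDisplacement M F y := by
  obtain ⟨g, rfl⟩ := MulAction.exists_smul_eq Γ y x
  exact (Fintype.sum_equiv (MulAction.toPerm g) _ _ fun z => by simp [hM, hF]).symm

end MeanSqDisplacement

section DisplacementGrowth

variable {Γ V : Type*} [Group Γ] [Fintype Γ] [MulAction Γ V] [Fintype V]
  {M : Matrix V V ℝ} {ψ : V → ℝ} {c : ℝ}

lemma sum_meanSqDisplacement_orbitEmbedding (hrow : ∀ x, ∑ y, M x y = 1)
    (hcol : ∀ y, ∑ x, M x y = 1) (hM : ∀ (g : Γ) x y, M (g • x) (g • y) = M x y)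
    (hψ : M *ᵥ ψ = c • ψ) :
    ∑ x, meanSqDisplacement M (orbitEmbedding Γ ψ) x =
      Fintype.card Γ * (2 * (1 - c) * ∑ x, ψ x ^ 2) := by
  have hψg (g : Γ) : M *ᵥ (fun x => ψ (g • x)) = c • fun x => ψ (g • x) := by
    rw [mulVec_comp_smul hM, hψ]; rfl
  have hnorm (g : Γ) : ∑ x, ψ (g • x) ^ 2 = ∑ x, ψ x ^ 2 :=
    Fintype.sum_equiv (MulAction.toPerm g) _ _ fun _ => rfl
  calc ∑ x, meanSqDisplacement M (orbitEmbedding Γ ψ) x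
      = ∑ g : Γ, ∑ x, ∑ y, M x y * (ψ (g • x) - ψ (g • y)) ^ 2 := by
        simp only [meanSqDisplacement, dist_orbitEmbedding_sq, mul_sum]
        exact (sum_congr rfl fun _ _ => sum_comm).trans sum_comm
    _ = ∑ _g : Γ, 2 * (1 - c) * ∑ x, ψ x ^ 2 := sum_congr rfl fun g _ => by
        rw [sum_sum_mul_sub_sq_of_mulVec_eq_smul hrow hcol (hψg g), hnorm]
    _ = Fintype.card Γ * (2 * (1 - c) * ∑ x, ψ x ^ 2) := by
        rw [sum_const, card_univ, nsmul_eq_mul]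

variable [DecidableEq V] [MulAction.IsPretransitive Γ V]

lemma card_mul_meanSqDisplacement_pow_orbitEmbedding (hMds : M ∈ doublyStochastic ℝ V)
    (hM : ∀ (g : Γ) x y, M (g • x) (g • y) = M x y) (hψ : M *ᵥ ψ = c • ψ) (t : ℕ) (x : V) :
    Fintype.card V * meanSqDisplacement (M ^ t) (orbitEmbedding Γ ψ) x =
      Fintype.card Γ * (2 * (1 - c ^ t) * ∑ x, ψ x ^ 2) := by
  have hMt := pow_mem hMds t
  rw [← sum_meanSqDisplacement_orbitEmbedding (sum_row_of_mem_doublyStochastic hMt)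
    (sum_col_of_mem_doublyStochastic hMt) (pow_apply_smul_smul hM t) (pow_mulVec_eq_smul hψ t),
    sum_congr rfl fun y _ => meanSqDisplacement_eq_of_isPretransitive
      (pow_apply_smul_smul hM t) (dist_orbitEmbedding_smul ψ) y x,
    sum_const, card_univ, nsmul_eq_mul]

lemma meanSqDisplacement_pow_orbitEmbedding (hMds : M ∈ doublyStochastic ℝ V)
    (hM : ∀ (g : Γ) x y, M (g • x) (g • y) = M x y) (hψ : M *ᵥ ψ = c • ψ) (t : ℕ) (x : V) :
    meanSqDisplacement (M ^ t) (orbitEmbedding Γ ψ) x =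
      meanSqDisplacement M (orbitEmbedding Γ ψ) x * ∑ j ∈ range t, c ^ j := by
  have hV : (Fintype.card V : ℝ) ≠ 0 := by
    have : Nonempty V := ⟨x⟩
    positivity
  refine mul_left_cancel₀ hV ?_
  have h1 := card_mul_meanSqDisplacement_pow_orbitEmbedding hMds hM hψ 1 x
  rw [pow_one, pow_one] at h1
  rw [card_mul_meanSqDisplacement_pow_orbitEmbedding hMds hM hψ t x,
    ← mul_assoc _ (meanSqDisplacement _ _ _), h1, ← mul_neg_geom_sum]
  ring

lemma meanSqDisplacement_orbitEmbedding_pos (hMds : M ∈ doublyStochastic ℝ V)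
    (hM : ∀ (g : Γ) x y, M (g • x) (g • y) = M x y) (hψ : M *ᵥ ψ = c • ψ) (hψ0 : ψ ≠ 0)
    (hc : c < 1) (x : V) : 0 < meanSqDisplacement M (orbitEmbedding Γ ψ) x := by
  have h1 := card_mul_meanSqDisplacement_pow_orbitEmbedding hMds hM hψ 1 x
  rw [pow_one, pow_one] at h1
  have hψsq : 0 < ∑ x, ψ x ^ 2 := by
    refine lt_of_le_of_ne (by positivity) (Ne.symm ?_)
    simpa [dotProduct, sq] using dotProduct_self_eq_zero.not.2 hψ0
  have : Nonempty V := ⟨x⟩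
  refine pos_of_mul_pos_right (a := (Fintype.card V : ℝ)) ?_ (by positivity)
  rw [h1]
  have := sub_pos.2 hc
  positivity

end DisplacementGrowth

lemma SimpleGraph.IsRegularOfDegree.inv_smul_adjMatrix_mem_doublyStochastic {V : Type*}
    [Fintype V] [DecidableEq V] {G : SimpleGraph V} [DecidableRel G.Adj] {d : ℕ}
    (hG : G.IsRegularOfDegree d) (hd : 0 < d) : (d : ℝ)⁻¹ • G.adjMatrix ℝ ∈ doublyStochastic ℝ V := by
  have hrow : ((d : ℝ)⁻¹ • G.adjMatrix ℝ) *ᵥ 1 = 1 := by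
    ext x
    rw [smul_mulVec, Pi.smul_apply, ← Function.const_one,
      adjMatrix_mulVec_const_apply_of_regular hG]
    simp [hd.ne']
  refine ⟨fun x y => ?_, hrow, ?_⟩
  · rw [Matrix.smul_apply, smul_eq_mul, adjMatrix_apply]
    split_ifs <;> positivity
  rw [← mulVec_transpose, transpose_smul, transpose_adjMatrix, hrow]

theorem stmt8_general {V : Type*} [Fintype V] [DecidableEq V]
    (G : SimpleGraph V) [DecidableRel G.Adj]
    (hconn : G.Connected)
    (htrans : ∀ u v : V, ∃ φ : G ≃g G, φ u = v)
    (d : ℕ) (hd : 0 < d) (hreg : ∀ v : V, G.degree v = d)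
    (P : Matrix V V ℝ)
    (hP : ∀ x y : V, P x y = if G.Adj x y then (d : ℝ)⁻¹ else 0)
    (lam : ℝ) (hlam1 : lam < 1)
    (hev : ∃ ψ : V → ℝ, ψ ≠ 0 ∧ P.mulVec ψ = lam • ψ)
    (x₀ : V) :
    (∀ t : ℕ,
      (∑ j ∈ Finset.range t, lam ^ j) / (d : ℝ)
        ≤ ∑ y : V, (P ^ t) x₀ y * (G.dist x₀ y : ℝ) ^ 2) ∧
    ∀ t : ℕ, (t : ℝ) ≤ (1 - lam)⁻¹ →
      (t : ℝ) / (2 * d) ≤ ∑ y : V, (P ^ t) x₀ y * (G.dist x₀ y : ℝ) ^ 2 := by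
  obtain ⟨ψ, hψ0, hψ⟩ := hev
  have hPds : P ∈ doublyStochastic ℝ V := by
    convert SimpleGraph.IsRegularOfDegree.inv_smul_adjMatrix_mem_doublyStochastic hreg hd
    ext x y
    simp [hP, SimpleGraph.adjMatrix_apply]
  have hPinv (g : G ≃g G) (x y : V) : P (g • x) (g • y) = P x y := by simp [hP, g.map_adj_iff]
  have : Fintype (G ≃g G) :=
    have : Finite (G ≃g G) := Finite.of_injective _ RelIso.toEquiv_injective
    Fintype.ofFinite _
  have : MulAction.IsPretransitive (G ≃g G) V := ⟨htrans⟩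
  set F := orbitEmbedding (G ≃g G) ψ
  set c := meanSqDisplacement P F x₀
  have hc : 0 < c := meanSqDisplacement_orbitEmbedding_pos hPds hPinv hψ hψ0 hlam1 x₀
  have hedge (x y : V) (hxy : G.Adj x y) : dist (F x) (F y) ≤ √(d * c) := by
    have h := mul_dist_sq_le_meanSqDisplacement (M := P)
      (fun _ _ => nonneg_of_mem_doublyStochastic hPds) F x y
    rw [meanSqDisplacement_eq_of_isPretransitive hPinv (dist_orbitEmbedding_smul ψ) x x₀, hP,
      if_pos hxy] at h
    apply Real.le_sqrt_of_sq_le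
    rwa [inv_mul_le_iff₀ (by positivity)] at h
  have hmain (t : ℕ) :
      (∑ j ∈ range t, lam ^ j) / d ≤ ∑ y, (P ^ t) x₀ y * (G.dist x₀ y : ℝ) ^ 2 := by
    have h := meanSqDisplacement_le (M := P ^ t)
      (fun _ _ => nonneg_of_mem_doublyStochastic (pow_mem hPds t))
      (dist_le_mul_dist_of_adj_le hconn hedge) x₀
    rw [meanSqDisplacement_pow_orbitEmbedding hPds hPinv hψ, Real.sq_sqrt (by positivity)] at h
    rw [div_le_iff₀ (by positivity)]
    refine le_of_mul_le_mul_left ?_ hc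
    linarith
  refine ⟨hmain, fun t ht => ?_⟩
  calc (t : ℝ) / (2 * d) = (t / 2) / d := by ring
    _ ≤ (∑ j ∈ range t, lam ^ j) / d := by
      gcongr
      exact half_le_geom_sum ((le_div_iff₀ (sub_pos.2 hlam1)).1 (by rwa [one_div]))
    _ ≤ _ := hmain t

theorem stmt8 {V : Type*} [Fintype V] [DecidableEq V]
    (G : SimpleGraph V) [DecidableRel G.Adj]
    (hconn : G.Connected)
    (htrans : ∀ u v : V, ∃ φ : G ≃g G, φ u = v)
    (d : ℕ) (hd : 0 < d) (hreg : ∀ v : V, G.degree v = d)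
    (P : Matrix V V ℝ)
    (hP : ∀ x y : V, P x y = if G.Adj x y then (d : ℝ)⁻¹ else 0)
    (lam : ℝ) (hlam1 : lam < 1)
    (hev : ∃ ψ : V → ℝ, ψ ≠ 0 ∧ P.mulVec ψ = lam • ψ)
    (hmax : ∀ μ : ℝ, μ ≠ 1 → (∃ ψ : V → ℝ, ψ ≠ 0 ∧ P.mulVec ψ = μ • ψ) → μ ≤ lam)
    (x₀ : V) :
    (∀ t : ℕ,
      (∑ j ∈ Finset.range t, lam ^ j) / (d : ℝ)
        ≤ ∑ y : V, (P ^ t) x₀ y * (G.dist x₀ y : ℝ) ^ 2) ∧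
    ∀ t : ℕ, (t : ℝ) ≤ (1 - lam)⁻¹ →
      (t : ℝ) / (2 * d) ≤ ∑ y : V, (P ^ t) x₀ y * (G.dist x₀ y : ℝ) ^ 2 :=
  stmt8_general G hconn htrans d hd hreg P hP lam hlam1 hev x₀
end

section
/- Let {M_t} be a Hilbert-space-valued martingale with E[‖M_{t+1} − M_t‖² | F_t] = 1 and ‖M_{t+1} − M_t‖ ≤ B almost surely. For R ≥ 0 let τ be the first time t with ‖M_t − M_0‖ ≥ R. Then R² ≤ E[τ] ≤ (R + B)². -/
/-!
Orthogonality of martingale increments and the unit conditional variance make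
`‖M t - M 0‖² - t` a martingale, so optional stopping at the bounded times `τ ∧ n` gives
`E[τ ∧ n] = E ‖M (τ ∧ n) - M 0‖²`. Before `τ` the process stays in the open ball of radius `R`
and a single step moves it by at most `B`, hence `‖M (τ ∧ n) - M 0‖ ≤ R + B` and monotone
convergence bounds `E[τ]`. On `{τ ≤ n}` that norm is at least `R`, so `R² P(τ ≤ n) ≤ E[τ]`;
letting `n → ∞` gives `R² ≤ E[τ]` (trivially when `τ = ∞` with positive probability).
-/

open MeasureTheory Filter
open scoped ENNReal Topology

lemma norm_sub_zero_le_of_norm_succ_sub_le {E : Type*} [SeminormedAddCommGroup E] {x : ℕ → E}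
    {B : ℝ} (h : ∀ t, ‖x (t + 1) - x t‖ ≤ B) (n : ℕ) : ‖x n - x 0‖ ≤ n * B := by
  induction n with
  | zero => simp
  | succ n ih =>
    calc ‖x (n + 1) - x 0‖ ≤ ‖x (n + 1) - x n‖ + ‖x n - x 0‖ :=
          norm_sub_le_norm_sub_add_norm_sub _ _ _
      _ ≤ B + n * B := add_le_add (h n) ih
      _ = (n + 1 : ℕ) * B := by push_cast; ring

namespace MeasureTheory

section HittingTime

variable {Ω β : Type*}

lemma sInf_natCast_image_eq_hittingAfter (u : ℕ → Ω → β) (s : Set β) (ω : Ω) :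
    sInf ((fun t : ℕ => (t : ℝ≥0∞)) '' {t | u t ω ∈ s}) =
      ENat.toENNReal (hittingAfter u s 0 ω) := by
  refine le_antisymm ?_ (le_sInf ?_)
  · by_cases h : hittingAfter u s 0 ω = ⊤
    · rw [h]
      exact le_top
    · have hmem := hittingAfter_mem_set_of_ne_top h
      lift hittingAfter u s 0 ω to ℕ using h with k
      exact sInf_le ⟨k, hmem, rfl⟩
  · rintro _ ⟨t, ht, rfl⟩
    exact (ENat.toENNReal_le.2 (hittingAfter_le_of_mem (Nat.zero_le t) ht)).trans_eq
      (ENat.toENNReal_coe t)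

variable {u : ℕ → Ω → β} {s : Set β} {ω : Ω}

lemma stoppedProcess_hittingAfter_mem {n : ℕ} (h : hittingAfter u s 0 ω ≤ n) :
    stoppedProcess u (hittingAfter u s 0) n ω ∈ s := by
  rw [stoppedProcess_eq_of_ge (i := n) h]
  exact hittingAfter_mem_set_of_ne_top (ne_top_of_le_ne_top (WithTop.coe_ne_top) h)

lemma norm_stoppedProcess_hittingAfter_le {E : Type*} [SeminormedAddCommGroup E]
    {X : ℕ → Ω → E} {R B : ℝ} (h0 : ‖X 0 ω‖ ≤ R + B) (hstep : ∀ t, ‖X (t + 1) ω - X t ω‖ ≤ B)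
    (n : ℕ) :
    ‖(stoppedProcess X (hittingAfter (fun n ω => ‖X n ω‖) (Set.Ici R) 0) n ω)‖ ≤ R + B := by
  set σ := hittingAfter (fun n ω => ‖X n ω‖) (Set.Ici R) 0
  have hbefore : ∀ k : ℕ, (k : ℕ∞) ≤ σ ω → ‖X k ω‖ ≤ R + B := by
    rintro (_ | j) hj
    · exact h0
    · have hj : ‖X j ω‖ < R := not_le.1 <| notMem_of_lt_hittingAfter (u := fun n ω => ‖X n ω‖)
        (lt_of_lt_of_le (ENat.natCast_lt_natCast.2 j.lt_succ_self) hj) (Nat.zero_le j)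
      linarith [norm_le_insert' (X (j + 1) ω) (X j ω), hstep j]
  rcases le_total (n : ℕ∞) (σ ω) with h | h
  · rw [stoppedProcess_eq_of_le (i := n) h]
    exact hbefore n h
  · rw [stoppedProcess_eq_of_ge (i := n) h]
    lift σ ω to ℕ using ne_top_of_le_ne_top WithTop.coe_ne_top h with k
    exact hbefore k le_rfl

end HittingTime

section OptionalStopping

variable {Ω E : Type*} {m0 : MeasurableSpace Ω} {μ : Measure Ω} {ℱ : Filtration ℕ m0}
  [NormedAddCommGroup E] [NormedSpace ℝ E] [CompleteSpace E] {f : ℕ → Ω → E}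

lemma Martingale.condExp_succ_sub_ae_eq_zero (hf : Martingale f ℱ μ) (n : ℕ) :
    μ[f (n + 1) - f n | ℱ n] =ᵐ[μ] 0 := by
  filter_upwards [condExp_sub (hf.integrable (n + 1)) (hf.integrable n) (ℱ n),
    hf.condExp_ae_eq n.le_succ, hf.condExp_ae_eq (le_refl n)] with ω h h₁ h₀
  simp [h, h₁, h₀]

lemma IsStoppingTime.measurable_toENNReal {σ : Ω → ℕ∞} (hσ : IsStoppingTime ℱ σ) :
    Measurable fun ω => (σ ω : ℝ≥0∞) :=
  (WithTop.measurable_of_measurable_comp_coe (f := ENat.toENNReal) measurable_from_nat).comp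
    hσ.measurable'

variable [IsFiniteMeasure μ] {τ : Ω → ℕ∞} {N : ℕ}

lemma Martingale.integral_stoppedValue_eq_integral_zero (hf : Martingale f ℱ μ)
    (hτ : IsStoppingTime ℱ τ) (hbdd : ∀ ω, τ ω ≤ N) :
    ∫ ω, stoppedValue f τ ω ∂μ = ∫ ω, f 0 ω ∂μ := by
  rw [integral_congr_ae (hf.stoppedValue_ae_eq_condExp_of_le_const hτ hbdd),
    integral_condExp (hτ.measurableSpace_le_of_le hbdd),
    ← setIntegral_univ, ← hf.setIntegral_eq (Nat.zero_le N) MeasurableSet.univ, setIntegral_univ]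

end OptionalStopping

section Hilbert

variable {Ω H : Type*} {m0 : MeasurableSpace Ω} {μ : Measure Ω}
  {ℱ : Filtration ℕ m0} [NormedAddCommGroup H] [InnerProductSpace ℝ H] [CompleteSpace H]
  {M : ℕ → Ω → H}

section Finite

variable [IsFiniteMeasure μ]

lemma Martingale.condExp_norm_sq_succ (hM : Martingale M ℱ μ) (hL2 : ∀ n, MemLp (M n) 2 μ)
    (n : ℕ) :
    μ[fun ω => ‖M (n + 1) ω‖ ^ 2 | ℱ n] =ᵐ[μ]
      fun ω => ‖M n ω‖ ^ 2 + μ[fun ω => ‖M (n + 1) ω - M n ω‖ ^ 2 | ℱ n] ω := by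
  set D := M (n + 1) - M n
  have hD : MemLp D 2 μ := (hL2 (n + 1)).sub (hL2 n)
  have hsq : ∀ {f : Ω → H}, MemLp f 2 μ → Integrable (fun ω => ‖f ω‖ ^ 2) μ := fun hf =>
    hf.integrable_norm_pow two_ne_zero
  have hinner : Integrable (fun ω => innerSL ℝ (M n ω) (D ω)) μ :=
    memLp_one_iff_integrable.1 ((innerSL ℝ).memLp_of_bilin 1 (hL2 n) hD)
  have hexpand : (fun ω => ‖M (n + 1) ω‖ ^ 2) =
      (fun ω => ‖M n ω‖ ^ 2) + (2 : ℝ) • (fun ω => innerSL ℝ (M n ω) (D ω)) +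
        fun ω => ‖D ω‖ ^ 2 := by
    ext ω
    simp [D, ← norm_add_sq_real]
  have hcross : μ[fun ω => innerSL ℝ (M n ω) (D ω) | ℱ n] =ᵐ[μ] 0 := by
    filter_upwards [condExp_bilin_of_stronglyMeasurable_left (innerSL ℝ) (hM.stronglyAdapted n)
      hinner (hD.integrable one_le_two), hM.condExp_succ_sub_ae_eq_zero n] with ω h h₀
    rw [h, h₀]
    simp
  rw [hexpand]
  filter_upwards [condExp_add ((hsq (hL2 n)).add (hinner.smul (2 : ℝ))) (hsq hD) (ℱ n),
    condExp_add (hsq (hL2 n)) (hinner.smul (2 : ℝ)) (ℱ n),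
    condExp_smul (2 : ℝ) (fun ω => innerSL ℝ (M n ω) (D ω)) (ℱ n), hcross]
    with ω h₁ h₂ h₃ h₄
  rw [h₁, Pi.add_apply, h₂, Pi.add_apply, h₃, Pi.smul_apply, h₄,
    condExp_of_stronglyMeasurable (ℱ.le n) (f := fun ω => ‖M n ω‖ ^ 2)
      ((hM.stronglyAdapted n).norm.pow 2) (hsq (hL2 n))]
  simp [D]

lemma Martingale.norm_sq_sub_nat (hM : Martingale M ℱ μ) (hL2 : ∀ n, MemLp (M n) 2 μ)
    (hvar : ∀ n, μ[fun ω => ‖M (n + 1) ω - M n ω‖ ^ 2 | ℱ n] =ᵐ[μ] fun _ => (1 : ℝ)) :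
    Martingale (fun n ω => ‖M n ω‖ ^ 2 - n) ℱ μ := by
  have hsq : ∀ n, Integrable (fun ω => ‖M n ω‖ ^ 2) μ := fun n =>
    (hL2 n).integrable_norm_pow two_ne_zero
  refine martingale_nat (fun n => ((hM.stronglyAdapted n).norm.pow 2).sub stronglyMeasurable_const)
    (fun n => (hsq n).sub (integrable_const _)) fun n => ?_
  filter_upwards [condExp_sub (hsq (n + 1)) (integrable_const ((n + 1 : ℕ) : ℝ)) (ℱ n),
    hM.condExp_norm_sq_succ hL2 n, hvar n] with ω h h₁ h₂
  change _ = μ[(fun ω => ‖M (n + 1) ω‖ ^ 2) - fun _ => ((n + 1 : ℕ) : ℝ) | ℱ n] ω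
  rw [h, Pi.sub_apply, h₁, h₂, condExp_const (ℱ.le n)]
  push_cast
  ring

lemma Martingale.lintegral_norm_sq_stoppedProcess (hM : Martingale M ℱ μ)
    (hL2 : ∀ n, MemLp (M n) 2 μ)
    (hvar : ∀ n, μ[fun ω => ‖M (n + 1) ω - M n ω‖ ^ 2 | ℱ n] =ᵐ[μ] fun _ => (1 : ℝ))
    (hM0 : ∀ ω, M 0 ω = 0) {σ : Ω → ℕ∞} (hσ : IsStoppingTime ℱ σ) (n : ℕ) :
    ∫⁻ ω, ENNReal.ofReal (‖(stoppedProcess M σ n ω)‖ ^ 2) ∂μ =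
      ∫⁻ ω, ((min (n : ℕ∞) (σ ω) : ℕ∞) : ℝ≥0∞) ∂μ := by
  have hZ := hM.norm_sq_sub_nat hL2 hvar
  have hτ : IsStoppingTime ℱ fun ω => min (n : ℕ∞) (σ ω) := (isStoppingTime_const ℱ n).min hσ
  have hbdd : ∀ ω, min (n : ℕ∞) (σ ω) ≤ n := fun ω => min_le_left _ _
  have hsq : Integrable (fun ω => ‖(stoppedProcess M σ n ω)‖ ^ 2) μ :=
    integrable_stoppedValue ℕ hτ (fun n => (hL2 n).integrable_norm_pow two_ne_zero) hbdd
  have htime : Integrable (fun ω => ((min (n : ℕ∞) (σ ω)).untopA : ℝ)) μ :=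
    (hsq.sub (integrable_stoppedValue ℕ hτ hZ.integrable hbdd)).congr
      (ae_of_all _ fun _ => sub_sub_cancel _ _)
  have hwald : ∫ ω, ‖(stoppedProcess M σ n ω)‖ ^ 2 ∂μ =
      ∫ ω, ((min (n : ℕ∞) (σ ω)).untopA : ℝ) ∂μ := by
    have h := hZ.integral_stoppedValue_eq_integral_zero hτ hbdd
    rw [← sub_eq_zero, ← integral_sub hsq htime]
    exact h.trans (by simp [hM0])
  rw [← ofReal_integral_eq_lintegral_ofReal hsq (ae_of_all _ fun _ => by positivity), hwald,
    ofReal_integral_eq_lintegral_ofReal htime (ae_of_all _ fun _ => by positivity)]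
  refine lintegral_congr fun ω => ?_
  lift min (n : ℕ∞) (σ ω) to ℕ using ((hbdd ω).trans_lt (WithTop.coe_lt_top n)).ne with k
  simp

end Finite

section Probability

variable [IsProbabilityMeasure μ] {σ : Ω → ℕ∞}

lemma Martingale.lintegral_le_of_norm_stoppedProcess_le (hM : Martingale M ℱ μ)
    (hL2 : ∀ n, MemLp (M n) 2 μ)
    (hvar : ∀ n, μ[fun ω => ‖M (n + 1) ω - M n ω‖ ^ 2 | ℱ n] =ᵐ[μ] fun _ => (1 : ℝ))
    (hM0 : ∀ ω, M 0 ω = 0) (hσ : IsStoppingTime ℱ σ) {C : ℝ}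
    (hC : ∀ᵐ ω ∂μ, ∀ n, ‖(stoppedProcess M σ n ω)‖ ≤ C) :
    ∫⁻ ω, (σ ω : ℝ≥0∞) ∂μ ≤ ENNReal.ofReal (C ^ 2) := by
  have hsup : ∀ ω, (σ ω : ℝ≥0∞) = ⨆ n : ℕ, ((min (n : ℕ∞) (σ ω) : ℕ∞) : ℝ≥0∞) :=
    fun ω => by rw [← ENat.toENNReal_iSup, ← iSup_inf_eq, ENat.iSup_natCast, top_inf_eq]
  rw [lintegral_congr hsup, lintegral_iSup
    (f := fun n ω => ((min (n : ℕ∞) (σ ω) : ℕ∞) : ℝ≥0∞))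
    (fun n => ((isStoppingTime_const ℱ n).min hσ).measurable_toENNReal)
    (fun i j hij ω => ENat.toENNReal_le.2 (min_le_min_right _ (Nat.cast_le.2 hij)))]
  refine iSup_le fun n => ?_
  rw [← hM.lintegral_norm_sq_stoppedProcess hL2 hvar hM0 hσ n]
  calc ∫⁻ ω, ENNReal.ofReal (‖(stoppedProcess M σ n ω)‖ ^ 2) ∂μ
      ≤ ∫⁻ _, ENNReal.ofReal (C ^ 2) ∂μ := lintegral_mono_ae ?_
    _ = ENNReal.ofReal (C ^ 2) := by simp
  filter_upwards [hC] with ω hω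
  exact ENNReal.ofReal_le_ofReal (pow_le_pow_left₀ (norm_nonneg _) (hω n) 2)

lemma Martingale.le_lintegral_of_le_norm_stoppedProcess (hM : Martingale M ℱ μ)
    (hL2 : ∀ n, MemLp (M n) 2 μ)
    (hvar : ∀ n, μ[fun ω => ‖M (n + 1) ω - M n ω‖ ^ 2 | ℱ n] =ᵐ[μ] fun _ => (1 : ℝ))
    (hM0 : ∀ ω, M 0 ω = 0) (hσ : IsStoppingTime ℱ σ) {c : ℝ} (hc : 0 ≤ c)
    (hexit : ∀ ω (n : ℕ), σ ω ≤ n → c ≤ ‖(stoppedProcess M σ n ω)‖) :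
    ENNReal.ofReal (c ^ 2) ≤ ∫⁻ ω, (σ ω : ℝ≥0∞) ∂μ := by
  have hstopped : ∀ n : ℕ,
      ENNReal.ofReal (c ^ 2) * μ {ω | σ ω ≤ n} ≤ ∫⁻ ω, (σ ω : ℝ≥0∞) ∂μ := by
    intro n
    have hset : MeasurableSet {ω | σ ω ≤ n} := ℱ.le n _ (hσ.measurableSet_le n)
    calc ENNReal.ofReal (c ^ 2) * μ {ω | σ ω ≤ n}
        = ∫⁻ ω, {ω | σ ω ≤ n}.indicator (fun _ => ENNReal.ofReal (c ^ 2)) ω ∂μ :=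
          (lintegral_indicator_const hset _).symm
      _ ≤ ∫⁻ ω, ENNReal.ofReal (‖(stoppedProcess M σ n ω)‖ ^ 2) ∂μ := lintegral_mono fun ω => ?_
      _ = ∫⁻ ω, ((min (n : ℕ∞) (σ ω) : ℕ∞) : ℝ≥0∞) ∂μ :=
          hM.lintegral_norm_sq_stoppedProcess hL2 hvar hM0 hσ n
      _ ≤ ∫⁻ ω, (σ ω : ℝ≥0∞) ∂μ :=
          lintegral_mono fun ω => ENat.toENNReal_le.2 (min_le_right _ _)
    by_cases h : σ ω ≤ n
    · rw [Set.indicator_of_mem (show ω ∈ {ω | σ ω ≤ n} from h)]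
      exact ENNReal.ofReal_le_ofReal (pow_le_pow_left₀ hc (hexit ω n h) 2)
    · rw [Set.indicator_of_notMem (show ω ∉ {ω | σ ω ≤ n} from h)]
      exact zero_le
  have htop_meas : MeasurableSet {ω | σ ω = ⊤} := hσ.measurableSet_eq_top
  by_cases htop : μ {ω | σ ω = ⊤} = 0
  · have hunion : (⋃ n : ℕ, {ω | σ ω ≤ n}) = {ω | σ ω = ⊤}ᶜ := by
      ext ω
      simp only [Set.mem_iUnion, Set.mem_ofPred_eq, Set.mem_compl_iff]
      constructor
      · rintro ⟨n, hn⟩ h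
        simp [h] at hn
      · intro h
        lift σ ω to ℕ using h with k
        exact ⟨k, le_rfl⟩
    have hlim : Tendsto (fun n : ℕ => μ {ω | σ ω ≤ n}) atTop (𝓝 1) := by
      have h := tendsto_measure_iUnion_atTop (μ := μ) (s := fun n : ℕ => {ω | σ ω ≤ n})
        fun i j hij ω (hi : σ ω ≤ i) => hi.trans (Nat.cast_le.2 hij)
      rwa [hunion, (prob_compl_eq_one_iff htop_meas).2 htop] at h
    simpa using le_of_tendsto' (ENNReal.Tendsto.const_mul hlim (Or.inr ENNReal.ofReal_ne_top))
      hstopped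
  · rw [lintegral_eq_top_of_measure_eq_top_ne_zero hσ.measurable_toENNReal.aemeasurable
      (by simpa using htop)]
    exact le_top

end Probability

end Hilbert

end MeasureTheory

theorem stmt10 {Ω : Type*} {m : MeasurableSpace Ω} {μ : Measure Ω} [IsProbabilityMeasure μ]
    (ℱ : Filtration ℕ m)
    {H : Type*} [NormedAddCommGroup H] [InnerProductSpace ℝ H] [CompleteSpace H]
    (M : ℕ → Ω → H) (hM : Martingale M ℱ μ)
    (B : ℝ) (hB : 1 ≤ B)
    (hbdd : ∀ t : ℕ, ∀ᵐ ω ∂μ, ‖M (t + 1) ω - M t ω‖ ≤ B)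
    (hvar : ∀ t : ℕ,
      μ[(fun ω => ‖M (t + 1) ω - M t ω‖ ^ 2)|ℱ t] =ᵐ[μ] fun _ => (1 : ℝ))
    (R : ℝ) (hR : 0 ≤ R)
    (τ : Ω → ℝ≥0∞)
    (hτ : ∀ ω, τ ω = sInf ((fun t : ℕ => (t : ℝ≥0∞)) '' {t : ℕ | R ≤ ‖M t ω - M 0 ω‖})) :
    ENNReal.ofReal (R ^ 2) ≤ ∫⁻ ω, τ ω ∂μ ∧
      ∫⁻ ω, τ ω ∂μ ≤ ENNReal.ofReal ((R + B) ^ 2) := by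
  set X : ℕ → Ω → H := fun n ω => M n ω - M 0 ω
  have hincr : ∀ t ω, X (t + 1) ω - X t ω = M (t + 1) ω - M t ω := fun t ω =>
    sub_sub_sub_cancel_right _ _ _
  have hX : Martingale X ℱ μ :=
    hM.sub (martingale_const_fun ℱ μ (hM.stronglyAdapted 0) (hM.integrable 0))
  have hbdd' : ∀ᵐ ω ∂μ, ∀ t, ‖X (t + 1) ω - X t ω‖ ≤ B := by
    simpa only [hincr] using ae_all_iff.2 hbdd
  have hL2 : ∀ n, MemLp (X n) 2 μ := fun n =>
    MemLp.of_bound (hX.stronglyAdapted n |>.mono (ℱ.le n)).aestronglyMeasurable (n * B) <| by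
      filter_upwards [ae_all_iff.2 hbdd] with ω hω
      exact norm_sub_zero_le_of_norm_succ_sub_le (x := fun t => M t ω) hω n
  have hvar' : ∀ t, μ[fun ω => ‖X (t + 1) ω - X t ω‖ ^ 2 | ℱ t] =ᵐ[μ] fun _ => (1 : ℝ) := by
    simpa only [hincr] using hvar
  have hX0 : ∀ ω, X 0 ω = 0 := fun ω => sub_self _
  have hσ : IsStoppingTime ℱ (hittingAfter (fun n ω => ‖X n ω‖) (Set.Ici R) 0) :=
    Adapted.isStoppingTime_hittingAfter (fun n => (hX.stronglyAdapted n).norm.measurable)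
      measurableSet_Ici
  rw [lintegral_congr fun ω => (hτ ω).trans
    (sInf_natCast_image_eq_hittingAfter (fun n ω => ‖X n ω‖) (Set.Ici R) ω)]
  refine ⟨hX.le_lintegral_of_le_norm_stoppedProcess hL2 hvar' hX0 hσ hR
    fun ω n h => stoppedProcess_hittingAfter_mem h, ?_⟩
  refine hX.lintegral_le_of_norm_stoppedProcess_le hL2 hvar' hX0 hσ ?_
  filter_upwards [hbdd'] with ω hω n
  exact norm_stoppedProcess_hittingAfter_le (by rw [hX0, norm_zero]; linarith) hω n
end

section
/- Let {M_t} be a Hilbert-space-valued martingale with increments bounded by B almost surely. For R ≥ R' ≥ 0, let p be the probability that ‖M_t‖ ≥ ‖M_0‖ + R occurs before ‖M_t‖ ≤ ‖M_0‖ − R'. Then p ≥ R'/(2R + B), provided one of the two events occurs almost surely. -/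
/-!
`‖M t‖` is a submartingale (conditional Jensen). Before the exit time `τ` the walk
`‖M t‖ - ‖M 0‖` stays in `(-R', R)` and each step moves it by at most `B`, so the stopped walks
are uniformly bounded; optional stopping at the bounded times `min n τ` and dominated convergence
give `E[‖M τ‖ - ‖M 0‖] ≥ 0`. At an upper exit the overshoot is at most one step, so
`‖M τ‖ - ‖M 0‖ ≤ R + B` there, while it is `≤ -R'` at a lower exit. Hence
`0 ≤ (R + B) p - R' (1 - p)`, i.e. `p ≥ R' / (R + B + R') ≥ R' / (2R + B)`.
-/

open MeasureTheory Filter Topology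

theorem sub_mem_Icc_of_le_sInf {y : ℕ → ℝ} {a b c : ℝ} (ha : 0 ≤ a) (hb : 0 ≤ b)
    (hy : ∀ t, |y (t + 1) - y t| ≤ c) :
    ∀ t ≤ sInf {t | y t - y 0 ∈ Set.Ici a ∪ Set.Iic (-b)}, y t - y 0 ∈ Set.Icc (-b - c) (a + c)
  | 0, _ => by
    have := (abs_nonneg _).trans (hy 0)
    rw [sub_self, Set.mem_Icc]
    constructor <;> linarith
  | t + 1, ht => by
    have hnot := Nat.notMem_of_lt_sInf ht
    simp only [Set.mem_ofPred_eq, Set.mem_union, Set.mem_Ici, Set.mem_Iic, not_or, not_le] at hnot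
    obtain ⟨h₁, h₂⟩ := abs_le.1 (hy t)
    constructor <;> linarith

namespace MeasureTheory

variable {Ω : Type*} {m : MeasurableSpace Ω} {μ : Measure Ω}

theorem stoppedProcess_eq_min_of_eq_coe {ι β : Type*} [LinearOrder ι] [Nonempty ι]
    {u : ι → Ω → β} {τ : Ω → WithTop ι} {ω : Ω} {k : ι} (h : τ ω = k) (n : ι) :
    stoppedProcess u τ n ω = u (min n k) ω := by
  rw [stoppedProcess, h, ← WithTop.coe_min]
  rfl

theorem hittingAfter_zero_eq_sInf_of_exists {β : Type*} {u : ℕ → Ω → β} {s : Set β} {ω : Ω}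
    (h : ∃ t, u t ω ∈ s) : hittingAfter u s 0 ω = (sInf {t | u t ω ∈ s} : ℕ) := by
  simp [hittingAfter, h]

theorem untopD_hittingAfter_zero {β : Type*} (u : ℕ → Ω → β) (s : Set β) (ω : Ω) :
    (hittingAfter u s 0 ω).untopD 0 = sInf {t | u t ω ∈ s} := by
  by_cases h : ∃ t, u t ω ∈ s
  · rw [hittingAfter_zero_eq_sInf_of_exists h]
    rfl
  · simp [hittingAfter, not_exists.1 h]

theorem le_mul_measureReal_of_integral_nonneg [IsProbabilityMeasure μ] {X : Ω → ℝ}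
    (hX : Integrable X μ) (h0 : 0 ≤ ∫ ω, X ω ∂μ) {A : Set Ω} (hA : MeasurableSet A) {u l : ℝ}
    (hu : ∀ᵐ ω ∂μ, ω ∈ A → X ω ≤ u) (hl : ∀ᵐ ω ∂μ, ω ∉ A → X ω ≤ -l) :
    l ≤ (u + l) * μ.real A := by
  have hle : X ≤ᵐ[μ] fun ω => A.indicator (fun _ => u + l) ω - l := by
    filter_upwards [hu, hl] with ω hu hl
    by_cases hω : ω ∈ A
    · rw [Set.indicator_of_mem hω]
      linarith [hu hω]
    · rw [Set.indicator_of_notMem hω]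
      linarith [hl hω]
  have hint : ∫ ω, X ω ∂μ ≤ ∫ ω, (A.indicator (fun _ => u + l) ω - l) ∂μ :=
    integral_mono_ae hX (((integrable_const _).indicator hA).sub (integrable_const l)) hle
  rw [integral_sub ((integrable_const _).indicator hA) (integrable_const l),
    integral_indicator_const _ hA, integral_const] at hint
  simp only [probReal_univ, smul_eq_mul, one_mul] at hint
  linarith

theorem Martingale.submartingale_norm {ι E : Type*} [Preorder ι] [NormedAddCommGroup E]
    [NormedSpace ℝ E] [CompleteSpace E] {ℱ : Filtration ι m} {M : ι → Ω → E}
    (hM : Martingale M ℱ μ) : Submartingale (fun t ω => ‖M t ω‖) ℱ μ := by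
  refine ⟨fun t => (hM.stronglyAdapted t).norm, fun i j hij => ?_,
    fun t => (hM.integrable t).norm⟩
  filter_upwards [hM.condExp_ae_eq hij, norm_condExp_le (μ := μ) (m := ℱ i) (M j)]
    with ω hω hle
  rwa [hω] at hle

theorem measurable_apply_at_of_countable {ι β : Type*} [Countable ι] [MeasurableSpace ι]
    [MeasurableSingletonClass ι] [MeasurableSpace β] {u : ι → Ω → β} (hu : ∀ i, Measurable (u i))
    {τ : Ω → ι} (hτ : Measurable τ) : Measurable fun ω => u (τ ω) ω :=
  (measurable_from_prod_countable_left (f := fun p : Ω × ι => u p.2 p.1) hu).comp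
    (measurable_id.prodMk hτ)

variable {ℱ : Filtration ℕ m}

theorem Adapted.measurable_sInf_mem {β : Type*} [MeasurableSpace β] {u : ℕ → Ω → β}
    (hu : Adapted ℱ u) {s : Set β} (hs : MeasurableSet s) :
    Measurable fun ω => sInf {t | u t ω ∈ s} := by
  simp_rw [← untopD_hittingAfter_zero]
  exact (measurable_of_countable _).comp (hu.isStoppingTime_hittingAfter hs).measurable'

theorem Submartingale.integral_le_integral_of_ae_eq_isStoppingTime [SigmaFiniteFiltration μ ℱ]
    {f : ℕ → Ω → ℝ} (hf : Submartingale f ℱ μ) {σ : Ω → ℕ∞} (hσ : IsStoppingTime ℱ σ)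
    {τ : Ω → ℕ} (hστ : ∀ᵐ ω ∂μ, σ ω = τ ω) {g : Ω → ℝ} (hg : Integrable g μ)
    (hdom : ∀ᵐ ω ∂μ, ∀ t ≤ τ ω, |f t ω| ≤ g ω) :
    ∫ ω, f 0 ω ∂μ ≤ ∫ ω, f (τ ω) ω ∂μ := by
  have hstop := hf.stoppedProcess hσ
  have hlim : Tendsto (fun n => ∫ ω, stoppedProcess f σ n ω ∂μ) atTop
      (𝓝 (∫ ω, f (τ ω) ω ∂μ)) := by
    refine tendsto_integral_of_dominated_convergence g
      (fun n => (hstop.integrable n).aestronglyMeasurable) hg (fun n => ?_) ?_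
    · filter_upwards [hστ, hdom] with ω hω hdom
      rw [stoppedProcess_eq_min_of_eq_coe hω, Real.norm_eq_abs]
      exact hdom _ (min_le_right _ _)
    · filter_upwards [hστ] with ω hω
      refine tendsto_atTop_of_eventually_const (i₀ := τ ω) fun n hn => ?_
      rw [stoppedProcess_eq_min_of_eq_coe hω, min_eq_right hn]
  refine ge_of_tendsto' hlim fun n => ?_
  have h0 : stoppedProcess f σ 0 = f 0 := funext fun ω => stoppedProcess_eq_of_le bot_le
  simpa [h0] using hstop.setIntegral_le n.zero_le MeasurableSet.univ

theorem Submartingale.le_mul_measureReal_exit_above [IsProbabilityMeasure μ] {Y : ℕ → Ω → ℝ}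
    (hY : Submartingale Y ℱ μ) {c : ℝ} (hinc : ∀ t, ∀ᵐ ω ∂μ, |Y (t + 1) ω - Y t ω| ≤ c)
    {a b : ℝ} (ha : 0 ≤ a) (hb : 0 ≤ b)
    (hhit : ∀ᵐ ω ∂μ, ∃ t, Y 0 ω + a ≤ Y t ω ∨ Y t ω ≤ Y 0 ω - b)
    {τ : Ω → ℕ} (hτ : ∀ ω, τ ω = sInf {t | Y 0 ω + a ≤ Y t ω ∨ Y t ω ≤ Y 0 ω - b}) :
    b ≤ (a + c + b) * μ.real {ω | Y 0 ω + a ≤ Y (τ ω) ω} := by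
  set D : ℕ → Ω → ℝ := fun t ω => Y t ω - Y 0 ω
  suffices b ≤ (a + c + b) * μ.real {ω | a ≤ D (τ ω) ω} by
    simpa only [D, le_sub_iff_add_le'] using this
  have hD : Submartingale D ℱ μ :=
    hY.sub_martingale (martingale_const_fun ℱ μ (hY.stronglyAdapted 0) (hY.integrable 0))
  set s : Set ℝ := Set.Ici a ∪ Set.Iic (-b)
  have hs : MeasurableSet s := measurableSet_Ici.union measurableSet_Iic
  have hmem : ∀ t ω, D t ω ∈ s ↔ Y 0 ω + a ≤ Y t ω ∨ Y t ω ≤ Y 0 ω - b := fun t ω => by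
    simp only [D, s, Set.mem_union, Set.mem_Ici, Set.mem_Iic, le_sub_iff_add_le',
      sub_le_iff_le_add, neg_add_eq_sub]
  have hτD : τ = fun ω => sInf {t | D t ω ∈ s} := funext fun ω => by simp_rw [hτ, hmem]
  have hhitD : ∀ᵐ ω ∂μ, ∃ t, D t ω ∈ s := hhit.mono fun ω ⟨t, ht⟩ => ⟨t, (hmem t ω).2 ht⟩
  -- `τ` is `0` wherever no exit happens, so it is only a.e. equal to a stopping time.
  have hσ : ∀ᵐ ω ∂μ, hittingAfter D s 0 ω = τ ω := by
    filter_upwards [hhitD] with ω hω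
    rw [hittingAfter_zero_eq_sInf_of_exists hω, hτD]
  have hbound : ∀ᵐ ω ∂μ, ∀ t ≤ τ ω, D t ω ∈ Set.Icc (-b - c) (a + c) := by
    filter_upwards [ae_all_iff.2 hinc] with ω hω
    rw [hτD]
    exact sub_mem_Icc_of_le_sInf ha hb hω
  have hdom : ∀ᵐ ω ∂μ, ∀ t ≤ τ ω, |D t ω| ≤ a + b + c :=
    hbound.mono fun ω hω t ht =>
      abs_le.2 ⟨by linarith [(hω t ht).1], by linarith [(hω t ht).2]⟩
  have hOST : 0 ≤ ∫ ω, D (τ ω) ω ∂μ := by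
    simpa [D] using hD.integral_le_integral_of_ae_eq_isStoppingTime
      (hD.stronglyAdapted.adapted.isStoppingTime_hittingAfter hs) hσ
      (integrable_const (a + b + c)) hdom
  have hD_meas : Measurable fun ω => D (τ ω) ω :=
    measurable_apply_at_of_countable (fun t => ((hD.stronglyAdapted t).mono (ℱ.le t)).measurable)
      (hτD ▸ hD.stronglyAdapted.adapted.measurable_sInf_mem hs)
  refine le_mul_measureReal_of_integral_nonneg
    (Integrable.of_bound hD_meas.aestronglyMeasurable _ (hdom.mono fun ω h => h _ le_rfl))
    hOST (measurableSet_le measurable_const hD_meas) ?_ ?_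
  · filter_upwards [hbound] with ω hω _
    exact (hω _ le_rfl).2
  · filter_upwards [hhitD] with ω hω hωA
    have hexit : D (τ ω) ω ∈ s := hτD ▸ Nat.sInf_mem hω
    simpa [s, hωA] using hexit

end MeasureTheory

theorem stmt12 {Ω : Type*} {m : MeasurableSpace Ω} {μ : Measure Ω} [IsProbabilityMeasure μ]
    (ℱ : Filtration ℕ m)
    {H : Type*} [NormedAddCommGroup H] [InnerProductSpace ℝ H] [CompleteSpace H]
    (M : ℕ → Ω → H) (hM : Martingale M ℱ μ)
    (B : ℝ) (hB : 0 < B)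
    (hbdd : ∀ t : ℕ, ∀ᵐ ω ∂μ, ‖M (t + 1) ω - M t ω‖ ≤ B)
    (R R' : ℝ) (hR' : 0 ≤ R') (hRR' : R' ≤ R)
    (hhit : ∀ᵐ ω ∂μ, ∃ t : ℕ,
      ‖M 0 ω‖ + R ≤ ‖M t ω‖ ∨ ‖M t ω‖ ≤ ‖M 0 ω‖ - R')
    (τ : Ω → ℕ)
    (hτ : ∀ ω, τ ω =
      sInf {t : ℕ | ‖M 0 ω‖ + R ≤ ‖M t ω‖ ∨ ‖M t ω‖ ≤ ‖M 0 ω‖ - R'}) :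
    ENNReal.ofReal (R' / (2 * R + B))
      ≤ μ {ω | ‖M 0 ω‖ + R ≤ ‖M (τ ω) ω‖} := by
  set p := μ.real {ω | ‖M 0 ω‖ + R ≤ ‖M (τ ω) ω‖}
  have hexit : R' ≤ (R + B + R') * p :=
    hM.submartingale_norm.le_mul_measureReal_exit_above
      (fun t => (hbdd t).mono fun ω h => (abs_norm_sub_norm_le _ _).trans h)
      (hR'.trans hRR') hR' hhit hτ
  rw [← ofReal_measureReal]
  refine ENNReal.ofReal_le_ofReal (div_le_of_le_mul₀ (by linarith) measureReal_nonneg ?_)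
  calc R' ≤ (R + B + R') * p := hexit
    _ ≤ (2 * R + B) * p := mul_le_mul_of_nonneg_right (by linarith) measureReal_nonneg
    _ = p * (2 * R + B) := mul_comm _ _
end

section
/- Let P be the transition kernel of the simple random walk on the Cayley graph of a finitely generated group Γ with symmetric generating set S, and suppose Ψ : Γ → H is a Γ-equivariant P-harmonic map into a Hilbert space, normalized so that (1/|S|) ∑_{s∈S} ‖Ψ(e) − Ψ(s)‖² = 1. Then for the random walk {X_t}, E[‖Ψ(X_0) − Ψ(X_t)‖²] = t, and consequently E[dist(X_0, X_t)²] ≥ t/|S|. -/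
open Finset

/-- Word metric with respect to a generating set `S`: the least length of a word over `S`
expressing `g⁻¹ * h`. -/
noncomputable def wordDist {Γ : Type*} [Group Γ] (S : Finset Γ) (g h : Γ) : ℕ :=
  sInf {n : ℕ | ∃ w : Fin n → Γ, (∀ i, w i ∈ S) ∧ h = g * (List.ofFn w).prod}

/-!
Harmonicity says that the increments `Ψ g - Ψ (g * s)` average to zero over `s ∈ S`, so they are
orthogonal to the past, and equivariance says that every increment has the same mean square as the
first one, namely `1`. Hence `E ‖Ψ X₀ - Ψ X_t‖² = t`. On the other hand each generator moves `Ψ`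
by at most `√|S|`, so `‖Ψ 1 - Ψ g‖² ≤ |S| · dist(1, g)²`, which gives the lower bound on the
expected squared displacement.
-/

namespace SimpleRandomWalk

variable {Γ : Type*} [Group Γ] (S : Finset Γ)

def endpoint {t : ℕ} (w : Fin t → S) : Γ :=
  (List.ofFn fun i => (w i : Γ)).prod

/-- `E[f(X_t)]` for the simple random walk on the Cayley graph started at `X₀ = 1`. -/
noncomputable def expectation (t : ℕ) (f : Γ → ℝ) : ℝ :=
  ((S.card : ℝ) ^ t)⁻¹ * ∑ w : Fin t → S, f (endpoint S w)

variable {S}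

theorem endpoint_snoc {t : ℕ} (w : Fin t → S) (s : S) :
    endpoint S (Fin.snoc w s : Fin (t + 1) → S) = endpoint S w * s := by
  rw [endpoint, List.ofFn_succ', List.prod_concat]
  simp [endpoint]

theorem sum_endpoint_succ {M : Type*} [AddCommMonoid M] (t : ℕ) (f : Γ → M) :
    ∑ w : Fin (t + 1) → S, f (endpoint S w) = ∑ w : Fin t → S, ∑ s : S, f (endpoint S w * s) := by
  rw [← (Fin.snocEquiv fun _ => S).sum_comp, Fintype.sum_prod_type, Finset.sum_comm]
  exact sum_congr rfl fun w _ => sum_congr rfl fun s _ => by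
    rw [← endpoint_snoc]; rfl

/-- Markov property of the walk. -/
theorem expectation_succ (t : ℕ) (f : Γ → ℝ) :
    expectation S (t + 1) f = expectation S t fun g => (S.card : ℝ)⁻¹ * ∑ s ∈ S, f (g * s) := by
  simp only [expectation, sum_endpoint_succ, ← mul_sum, pow_succ, mul_inv, mul_assoc]
  congr 2
  exact sum_congr rfl fun w _ => sum_coe_sort S fun s => f (endpoint S w * s)

theorem expectation_add_const (hS : S.Nonempty) (t : ℕ) (f : Γ → ℝ) (c : ℝ) :
    expectation S t (fun g => f g + c) = expectation S t f + c := by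
  have hpow : (S.card : ℝ) ^ t ≠ 0 := pow_ne_zero t (by exact_mod_cast hS.card_ne_zero)
  simp only [expectation, sum_add_distrib, sum_const, card_univ, Fintype.card_pi, Fintype.card_coe,
    prod_const, Fintype.card_fin, nsmul_eq_mul]
  push_cast
  field_simp

theorem expectation_const_mul (t : ℕ) (f : Γ → ℝ) (c : ℝ) :
    expectation S t (fun g => c * f g) = c * expectation S t f := by
  simp only [expectation, ← mul_sum]
  ring

theorem expectation_mono (t : ℕ) {f g : Γ → ℝ}
    (hfg : ∀ w : Fin t → S, f (endpoint S w) ≤ g (endpoint S w)) :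
    expectation S t f ≤ expectation S t g :=
  mul_le_mul_of_nonneg_left (sum_le_sum fun w _ => hfg _) (by positivity)

end SimpleRandomWalk

open SimpleRandomWalk

section Equivariant

variable {Γ : Type*} [Group Γ]

theorem dist_mul_eq_of_equivariant {H : Type*} [PseudoMetricSpace H] {Ψ : Γ → H}
    (π : Γ →* (H ≃ᵢ H)) (hequiv : ∀ g h : Γ, π g (Ψ h) = Ψ (g * h)) (g h : Γ) :
    dist (Ψ g) (Ψ (g * h)) = dist (Ψ 1) (Ψ h) := by
  rw [← hequiv g h, ← mul_one g, ← hequiv g 1, mul_one, (π g).dist_eq]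

theorem dist_prod_ofFn_le {H : Type*} [PseudoMetricSpace H] {S : Finset Γ} {Ψ : Γ → H}
    (hinv : ∀ g h : Γ, dist (Ψ g) (Ψ (g * h)) = dist (Ψ 1) (Ψ h))
    {L : ℝ} (hL : ∀ s ∈ S, dist (Ψ 1) (Ψ s) ≤ L) :
    ∀ {n : ℕ} (w : Fin n → Γ), (∀ i, w i ∈ S) → dist (Ψ 1) (Ψ (List.ofFn w).prod) ≤ n * L
  | 0, _, _ => by simp
  | n + 1, w, hw => by
    rw [List.ofFn_succ, List.prod_cons]
    calc dist (Ψ 1) (Ψ (w 0 * (List.ofFn fun i => w i.succ).prod))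
        ≤ dist (Ψ 1) (Ψ (w 0)) + dist (Ψ (w 0)) (Ψ (w 0 * (List.ofFn fun i => w i.succ).prod)) :=
          dist_triangle _ _ _
      _ ≤ L + n * L := by
          rw [hinv]
          exact add_le_add (hL _ (hw 0)) (dist_prod_ofFn_le hinv hL _ fun i => hw i.succ)
      _ = (n + 1 : ℕ) * L := by push_cast; ring

theorem exists_word_length_wordDist (S : Finset Γ) {t : ℕ} (w : Fin t → S) :
    ∃ v : Fin (wordDist S 1 (endpoint S w)) → Γ,
      (∀ i, v i ∈ S) ∧ endpoint S w = (List.ofFn v).prod := by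
  obtain ⟨v, hv, hwv⟩ := Nat.sInf_mem (s := {n : ℕ | ∃ v : Fin n → Γ,
    (∀ i, v i ∈ S) ∧ endpoint S w = 1 * (List.ofFn v).prod})
    ⟨t, fun i => (w i : Γ), fun i => (w i).2, (one_mul _).symm⟩
  exact ⟨v, hv, by rwa [one_mul] at hwv⟩

theorem dist_endpoint_le_wordDist_mul {H : Type*} [PseudoMetricSpace H] {S : Finset Γ}
    {Ψ : Γ → H} (hinv : ∀ g h : Γ, dist (Ψ g) (Ψ (g * h)) = dist (Ψ 1) (Ψ h))
    {L : ℝ} (hL : ∀ s ∈ S, dist (Ψ 1) (Ψ s) ≤ L) {t : ℕ} (w : Fin t → S) :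
    dist (Ψ 1) (Ψ (endpoint S w)) ≤ wordDist S 1 (endpoint S w) * L := by
  obtain ⟨v, hv, hwv⟩ := exists_word_length_wordDist S w
  conv_lhs => rw [hwv]
  exact dist_prod_ofFn_le hinv hL v hv

end Equivariant

section Harmonic

variable {Γ : Type*} [Group Γ] {S : Finset Γ}
  {E : Type*} [NormedAddCommGroup E] [InnerProductSpace ℝ E] {Ψ : Γ → E}

theorem sum_sub_mul_eq_zero_of_harmonic (hS : S.Nonempty)
    (hharm : ∀ h : Γ, Ψ h = ((S.card : ℝ))⁻¹ • ∑ s ∈ S, Ψ (h * s)) (g : Γ) :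
    ∑ s ∈ S, (Ψ g - Ψ (g * s)) = 0 := by
  have hcard : (S.card : ℝ) ≠ 0 := by exact_mod_cast hS.card_ne_zero
  rw [sum_sub_distrib, sum_const, sub_eq_zero, ← Nat.cast_smul_eq_nsmul ℝ, hharm g,
    smul_inv_smul₀ hcard]

/-- Pythagoras for the martingale `Ψ(X_t)`: the new increment is orthogonal to `Ψ 1 - Ψ g`. -/
theorem sum_norm_sub_mul_sq (hS : S.Nonempty)
    (hinv : ∀ g h : Γ, dist (Ψ g) (Ψ (g * h)) = dist (Ψ 1) (Ψ h))
    (hharm : ∀ h : Γ, Ψ h = ((S.card : ℝ))⁻¹ • ∑ s ∈ S, Ψ (h * s)) (g : Γ) :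
    ∑ s ∈ S, ‖Ψ 1 - Ψ (g * s)‖ ^ 2 = S.card * ‖Ψ 1 - Ψ g‖ ^ 2 + ∑ s ∈ S, ‖Ψ 1 - Ψ s‖ ^ 2 := by
  have hsplit : ∀ s, ‖Ψ 1 - Ψ (g * s)‖ ^ 2 = ‖Ψ 1 - Ψ g‖ ^ 2
      + 2 * inner ℝ (Ψ 1 - Ψ g) (Ψ g - Ψ (g * s)) + ‖Ψ 1 - Ψ s‖ ^ 2 := fun s => by
    rw [← sub_add_sub_cancel (Ψ 1) (Ψ g), norm_add_sq_real, ← dist_eq_norm (Ψ g), hinv,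
      dist_eq_norm]
  simp only [hsplit, sum_add_distrib, sum_const, nsmul_eq_mul, ← mul_sum, ← inner_sum,
    sum_sub_mul_eq_zero_of_harmonic hS hharm g, inner_zero_right, mul_zero, add_zero]

theorem expectation_norm_sub_sq (hS : S.Nonempty)
    (hinv : ∀ g h : Γ, dist (Ψ g) (Ψ (g * h)) = dist (Ψ 1) (Ψ h))
    (hharm : ∀ h : Γ, Ψ h = ((S.card : ℝ))⁻¹ • ∑ s ∈ S, Ψ (h * s)) (t : ℕ) :
    expectation S t (fun g => ‖Ψ 1 - Ψ g‖ ^ 2) = t * ((S.card : ℝ)⁻¹ * ∑ s ∈ S, ‖Ψ 1 - Ψ s‖ ^ 2) := by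
  have hcard : (S.card : ℝ) ≠ 0 := by exact_mod_cast hS.card_ne_zero
  induction t with
  | zero => simp [expectation, endpoint]
  | succ t ih =>
    simp only [expectation_succ, sum_norm_sub_mul_sq hS hinv hharm, mul_add, ← mul_assoc,
      inv_mul_cancel₀ hcard, one_mul]
    rw [expectation_add_const hS, ih]
    push_cast
    ring

end Harmonic

theorem stmt15_general {Γ : Type*} [Group Γ]
    (S : Finset Γ) (hS0 : S.Nonempty)
    {H : Type*} [NormedAddCommGroup H] [InnerProductSpace ℝ H]
    (Ψ : Γ → H)
    (π : Γ →* (H ≃ᵢ H))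
    (hequiv : ∀ g h : Γ, π g (Ψ h) = Ψ (g * h))
    (hharm : ∀ h : Γ, Ψ h = ((S.card : ℝ))⁻¹ • ∑ s ∈ S, Ψ (h * s))
    (hnorm : ((S.card : ℝ))⁻¹ * ∑ s ∈ S, ‖Ψ 1 - Ψ s‖ ^ 2 = 1) :
    ∀ t : ℕ,
      (((S.card : ℝ) ^ t)⁻¹ *
          ∑ w : Fin t → S, ‖Ψ 1 - Ψ ((List.ofFn fun i => (w i : Γ)).prod)‖ ^ 2 = t) ∧
      (t : ℝ) / S.card ≤
        ((S.card : ℝ) ^ t)⁻¹ *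
          ∑ w : Fin t → S,
            (wordDist S 1 ((List.ofFn fun i => (w i : Γ)).prod) : ℝ) ^ 2 := by
  intro t
  have hcard : (0 : ℝ) < S.card := by exact_mod_cast hS0.card_pos
  have hinv := dist_mul_eq_of_equivariant π hequiv
  have hmean : expectation S t (fun g => ‖Ψ 1 - Ψ g‖ ^ 2) = t := by
    rw [expectation_norm_sub_sq hS0 hinv hharm, hnorm, mul_one]
  have hstep : ∀ s ∈ S, dist (Ψ 1) (Ψ s) ≤ √S.card := fun s hs => by
    rw [dist_eq_norm, Real.le_sqrt (norm_nonneg _) hcard.le]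
    calc ‖Ψ 1 - Ψ s‖ ^ 2 ≤ ∑ s ∈ S, ‖Ψ 1 - Ψ s‖ ^ 2 :=
          single_le_sum (f := fun s => ‖Ψ 1 - Ψ s‖ ^ 2) (fun _ _ => by positivity) hs
      _ = S.card := ((inv_mul_eq_one₀ hcard.ne').mp hnorm).symm
  have hlip : ∀ w : Fin t → S, ‖Ψ 1 - Ψ (endpoint S w)‖ ^ 2
      ≤ S.card * (wordDist S 1 (endpoint S w) : ℝ) ^ 2 := fun w => by
    calc ‖Ψ 1 - Ψ (endpoint S w)‖ ^ 2 ≤ (wordDist S 1 (endpoint S w) * √S.card) ^ 2 := by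
          rw [← dist_eq_norm]
          gcongr
          exact dist_endpoint_le_wordDist_mul hinv hstep w
      _ = S.card * (wordDist S 1 (endpoint S w) : ℝ) ^ 2 := by
          rw [mul_pow, Real.sq_sqrt hcard.le, mul_comm]
  refine ⟨hmean, ?_⟩
  rw [div_le_iff₀' hcard, ← hmean]
  exact (expectation_mono t hlip).trans_eq
    (expectation_const_mul t (fun g => (wordDist S 1 g : ℝ) ^ 2) _)

theorem stmt15 {Γ : Type*} [Group Γ] [DecidableEq Γ]
    (S : Finset Γ) (hS0 : S.Nonempty) (hSsymm : ∀ s ∈ S, s⁻¹ ∈ S)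
    (hSgen : Subgroup.closure (S : Set Γ) = ⊤)
    {H : Type*} [NormedAddCommGroup H] [InnerProductSpace ℝ H] [CompleteSpace H]
    (Ψ : Γ → H)
    (π : Γ →* (H ≃ᵢ H))
    (hequiv : ∀ g h : Γ, π g (Ψ h) = Ψ (g * h))
    (hharm : ∀ h : Γ, Ψ h = ((S.card : ℝ))⁻¹ • ∑ s ∈ S, Ψ (h * s))
    (hnorm : ((S.card : ℝ))⁻¹ * ∑ s ∈ S, ‖Ψ 1 - Ψ s‖ ^ 2 = 1) :
    ∀ t : ℕ,
      (((S.card : ℝ) ^ t)⁻¹ *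
          ∑ w : Fin t → S, ‖Ψ 1 - Ψ ((List.ofFn fun i => (w i : Γ)).prod)‖ ^ 2 = t) ∧
      (t : ℝ) / S.card ≤
        ((S.card : ℝ) ^ t)⁻¹ *
          ∑ w : Fin t → S,
            (wordDist S 1 ((List.ofFn fun i => (w i : Γ)).prod) : ℝ) ^ 2 :=
  stmt15_general S hS0 Ψ π hequiv hharm hnorm
end

section
/- Let P be a symmetric stochastic kernel on a countable set V and ψ ∈ ℓ²(V). Suppose a group Γ acts on V preserving P, with normalized Haar measure μ (μ(Γ_x) = 1 for stabilizers). Define Ψ : V → L²(Γ, μ) by Ψ(x)(σ) = ψ(σx). Then for every z ∈ V, ∑_y P(z,y)‖Ψ(y) − Ψ(z)‖²_{L²(Γ,μ)} = 2⟨ψ, (I − P)ψ⟩_{ℓ²(V)}. -/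
theorem stmt19 {V : Type*} [Countable V] {Γ : Type*} [Group Γ] [Countable Γ]
    [MulAction Γ V]
    (hsimply : ∀ x y : V, ∃! g : Γ, g • x = y)
    (P : V → V → ℝ) (hPnonneg : ∀ x y, 0 ≤ P x y)
    (hPsymm : ∀ x y, P x y = P y x)
    (hPstoch : ∀ x, ∑' y : V, P x y = 1)
    (hPinv : ∀ (g : Γ) (x y : V), P (g • x) (g • y) = P x y)
    (ψ : V → ℝ) (hψ : Memℓp ψ 2) :
    ∀ z : V,
      ∑' y : V, P z y * ∑' σ : Γ, (ψ (σ • y) - ψ (σ • z)) ^ 2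
        = 2 * ∑' x : V, ψ x * (ψ x - ∑' y : V, P x y * ψ y) := by
  classical
  intro z
  -- the orbit maps are bijections
  have hbij : ∀ w : V, Function.Bijective (fun σ : Γ => σ • w) := by
    intro w
    constructor
    · intro a b hab
      obtain ⟨g, hg, hu⟩ := hsimply w (a • w)
      exact (hu a rfl).trans (hu b (by simpa using hab.symm)).symm
    · intro y
      obtain ⟨g, hg, _⟩ := hsimply w y
      exact ⟨g, hg⟩
  let e : V → Γ ≃ V := fun w => Equiv.ofBijective _ (hbij w)
  -- ψ² is summable
  have hs2 : Summable fun x => ψ x ^ 2 := by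
    have h := hψ.summable (by norm_num)
    have : (fun x => ‖ψ x‖ ^ (2 : ENNReal).toReal) = fun x => ψ x ^ 2 := by
      funext x
      rw [show (2 : ENNReal).toReal = ((2 : ℕ) : ℝ) by norm_num, Real.rpow_natCast,
        Real.norm_eq_abs, sq_abs]
    rwa [this] at h
  set S := ∑' x, ψ x ^ 2 with hSdef
  have hPsum : ∀ x : V, Summable (P x) := by
    intro x
    by_contra h
    exact one_ne_zero ((hPstoch x).symm.trans (tsum_eq_zero_of_not_summable h))
  have hsq : ∀ w : V, Summable fun σ : Γ => ψ (σ • w) ^ 2 := fun w =>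
    ((e w).summable_iff (f := fun x => ψ x ^ 2)).mpr hs2
  have hsqsum : ∀ w : V, ∑' σ : Γ, ψ (σ • w) ^ 2 = S := fun w =>
    (e w).tsum_eq (fun x => ψ x ^ 2)
  have habs_le : ∀ a b : ℝ, |a * b| ≤ (a ^ 2 + b ^ 2) / 2 := by
    intro a b
    rw [abs_le]
    constructor <;> nlinarith [sq_nonneg (a + b), sq_nonneg (a - b)]
  have hbound : ∀ w : V, Summable fun σ : Γ => (ψ (σ • w) ^ 2 + ψ (σ • z) ^ 2) / 2 :=
    fun w => ((hsq w).add (hsq z)).div_const 2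
  have hcrossabs : ∀ w : V, Summable fun σ : Γ => |ψ (σ • w) * ψ (σ • z)| := fun w =>
    Summable.of_nonneg_of_le (fun σ => abs_nonneg _) (fun σ => habs_le _ _) (hbound w)
  have hcross : ∀ w : V, Summable fun σ : Γ => ψ (σ • w) * ψ (σ • z) :=
    fun w => (hcrossabs w).of_abs
  have hboundsum : ∀ w : V, ∑' σ : Γ, (ψ (σ • w) ^ 2 + ψ (σ • z) ^ 2) / 2 = S := by
    intro w
    rw [tsum_div_const, Summable.tsum_add (hsq w) (hsq z), hsqsum w, hsqsum z]
    ring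
  have hTabs_le : ∀ w : V, ∑' σ : Γ, |ψ (σ • w) * ψ (σ • z)| ≤ S := by
    intro w
    calc ∑' σ : Γ, |ψ (σ • w) * ψ (σ • z)|
        ≤ ∑' σ : Γ, (ψ (σ • w) ^ 2 + ψ (σ • z) ^ 2) / 2 :=
          Summable.tsum_le_tsum (fun σ => habs_le _ _) (hcrossabs w) (hbound w)
      _ = S := hboundsum w
  set T : V → ℝ := fun w => ∑' σ : Γ, ψ (σ • w) * ψ (σ • z) with hTdef
  have hTle : ∀ w, |T w| ≤ S := by
    intro w
    calc |T w| ≤ ∑' σ : Γ, |ψ (σ • w) * ψ (σ • z)| :=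
          norm_tsum_le_tsum_norm (f := fun σ : Γ => ψ (σ • w) * ψ (σ • z)) (hcrossabs w)
      _ ≤ S := hTabs_le w
  -- inner sum identity
  have hI : ∀ w : V, (∑' σ : Γ, (ψ (σ • w) - ψ (σ • z)) ^ 2) = 2 * S - 2 * T w := by
    intro w
    have h1 : ∀ σ : Γ, (ψ (σ • w) - ψ (σ • z)) ^ 2
        = (ψ (σ • w) ^ 2 + ψ (σ • z) ^ 2) - 2 * (ψ (σ • w) * ψ (σ • z)) := by
      intro σ; ring
    rw [tsum_congr h1,
      Summable.tsum_sub ((hsq w).add (hsq z)) ((hcross w).mul_left 2),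
      Summable.tsum_add (hsq w) (hsq z), tsum_mul_left, hsqsum w, hsqsum z, hTdef]
    ring
  -- LHS
  have hPT : Summable fun y => P z y * T y := by
    apply Summable.of_abs
    apply Summable.of_nonneg_of_le (fun y => abs_nonneg _) ?_ ((hPsum z).mul_right S)
    intro y
    rw [abs_mul, abs_of_nonneg (hPnonneg z y)]
    exact mul_le_mul_of_nonneg_left (hTle y) (hPnonneg z y)
  have hLHS : (∑' y : V, P z y * ∑' σ : Γ, (ψ (σ • y) - ψ (σ • z)) ^ 2)
      = 2 * S - 2 * ∑' y : V, P z y * T y := by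
    have h2 : ∀ y : V, P z y * ∑' σ : Γ, (ψ (σ • y) - ψ (σ • z)) ^ 2
        = P z y * (2 * S) - 2 * (P z y * T y) := by
      intro y; rw [hI y]; ring
    rw [tsum_congr h2, Summable.tsum_sub ((hPsum z).mul_right (2 * S)) (hPT.mul_left 2),
      tsum_mul_right, tsum_mul_left, hPstoch z]
    ring
  -- Fubini for the cross term
  have hGabs : Summable (fun p : V × Γ => P z p.1 * |ψ (p.2 • p.1) * ψ (p.2 • z)|) := by
    have hnn : 0 ≤ fun p : V × Γ => P z p.1 * |ψ (p.2 • p.1) * ψ (p.2 • z)| :=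
      fun p => mul_nonneg (hPnonneg _ _) (abs_nonneg _)
    refine (summable_prod_of_nonneg hnn).mpr ⟨fun y => (hcrossabs y).mul_left (P z y), ?_⟩
    apply Summable.of_nonneg_of_le ?_ ?_ ((hPsum z).mul_right S)
    · intro y
      exact tsum_nonneg fun σ => mul_nonneg (hPnonneg z y) (abs_nonneg _)
    · intro y
      show (∑' σ : Γ, P z y * |ψ (σ • y) * ψ (σ • z)|) ≤ P z y * S
      rw [tsum_mul_left]
      exact mul_le_mul_of_nonneg_left (hTabs_le y) (hPnonneg z y)
  have hG : Summable (fun p : V × Γ => P z p.1 * (ψ (p.2 • p.1) * ψ (p.2 • z))) := by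
    apply Summable.of_abs
    have : (fun p : V × Γ => |P z p.1 * (ψ (p.2 • p.1) * ψ (p.2 • z))|)
        = fun p : V × Γ => P z p.1 * |ψ (p.2 • p.1) * ψ (p.2 • z)| := by
      funext p
      rw [abs_mul, abs_of_nonneg (hPnonneg z p.1)]
    rw [this]
    exact hGabs
  set Pψ : V → ℝ := fun x => ∑' y : V, P x y * ψ y with hPψdef
  have hU : (∑' y : V, P z y * T y) = ∑' x : V, ψ x * Pψ x := by
    have hstep1 : (∑' y : V, P z y * T y)
        = ∑' (y : V) (σ : Γ), P z y * (ψ (σ • y) * ψ (σ • z)) := by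
      refine tsum_congr fun y => ?_
      rw [hTdef, tsum_mul_left]
    have hstep2 : (∑' (y : V) (σ : Γ), P z y * (ψ (σ • y) * ψ (σ • z)))
        = ∑' (σ : Γ) (y : V), P z y * (ψ (σ • y) * ψ (σ • z)) :=
      (Summable.tsum_comm (f := fun (y : V) (σ : Γ) => P z y * (ψ (σ • y) * ψ (σ • z))) hG).symm
    have hstep3 : ∀ σ : Γ, (∑' y : V, P z y * (ψ (σ • y) * ψ (σ • z)))
        = ψ (σ • z) * Pψ (σ • z) := by
      intro σ
      have h4 : ∀ y : V, P z y * (ψ (σ • y) * ψ (σ • z))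
          = ψ (σ • z) * (P (σ • z) (σ • y) * ψ (σ • y)) := by
        intro y; rw [hPinv σ z y]; ring
      rw [tsum_congr h4, tsum_mul_left, hPψdef]
      congr 1
      exact (MulAction.toPerm σ).tsum_eq (fun w => P (σ • z) w * ψ w)
    rw [hstep1, hstep2, tsum_congr hstep3]
    exact (e z).tsum_eq (fun x => ψ x * Pψ x)
  -- summability of x ↦ ∑' y, P x y * ψ y ^ 2
  have hF : Summable (fun p : V × V => P p.1 p.2 * ψ p.2 ^ 2) := by
    have h1 : Summable (fun q : V × V => P q.2 q.1 * ψ q.1 ^ 2) := by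
      have hnn : 0 ≤ fun q : V × V => P q.2 q.1 * ψ q.1 ^ 2 :=
        fun q => mul_nonneg (hPnonneg _ _) (sq_nonneg _)
      apply (summable_prod_of_nonneg hnn).mpr
      · constructor
        · intro y
          have : (fun x => P x y * ψ y ^ 2) = fun x => P y x * ψ y ^ 2 := by
            funext x; rw [hPsymm]
          rw [this]
          exact (hPsum y).mul_right _
        · have h2 : ∀ y : V, (∑' x : V, P x y * ψ y ^ 2) = ψ y ^ 2 := by
            intro y
            calc (∑' x : V, P x y * ψ y ^ 2) = ∑' x : V, P y x * ψ y ^ 2 :=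
                  tsum_congr fun x => by rw [hPsymm]
              _ = (∑' x : V, P y x) * ψ y ^ 2 := tsum_mul_right
              _ = ψ y ^ 2 := by rw [hPstoch y]; ring
          rw [show (fun y : V => ∑' x : V, P x y * ψ y ^ 2) = fun y => ψ y ^ 2 from funext h2]
          exact hs2
    exact ((Equiv.prodComm V V).summable_iff
      (f := fun p : V × V => P p.1 p.2 * ψ p.2 ^ 2)).mp h1
  have hFfact := (summable_prod_of_nonneg
    (fun p : V × V => mul_nonneg (hPnonneg p.1 p.2) (sq_nonneg _))).mp hF
  have hFy : ∀ x, Summable fun y => P x y * ψ y ^ 2 := hFfact.1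
  have hg : Summable (fun x => ∑' y : V, P x y * ψ y ^ 2) := hFfact.2
  -- summability of x ↦ ψ x * Pψ x
  have hrow : ∀ x : V, Summable fun y => |ψ x * (P x y * ψ y)| := by
    intro x
    apply Summable.of_nonneg_of_le (fun y => abs_nonneg _) ?_
      (((hPsum x).mul_right (ψ x ^ 2 / 2)).add ((hFy x).div_const 2))
    intro y
    have h5 : |ψ x * (P x y * ψ y)| = P x y * |ψ x * ψ y| := by
      rw [show ψ x * (P x y * ψ y) = P x y * (ψ x * ψ y) by ring, abs_mul,
        abs_of_nonneg (hPnonneg x y)]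
    rw [h5]
    calc P x y * |ψ x * ψ y| ≤ P x y * ((ψ x ^ 2 + ψ y ^ 2) / 2) :=
          mul_le_mul_of_nonneg_left (habs_le _ _) (hPnonneg x y)
      _ = P x y * (ψ x ^ 2 / 2) + P x y * ψ y ^ 2 / 2 := by ring
  have hbnd : ∀ x : V, |ψ x * Pψ x| ≤ ψ x ^ 2 / 2 + (∑' y : V, P x y * ψ y ^ 2) / 2 := by
    intro x
    have h1 : ψ x * Pψ x = ∑' y : V, ψ x * (P x y * ψ y) := by
      rw [hPψdef, tsum_mul_left]
    calc |ψ x * Pψ x| ≤ ∑' y : V, |ψ x * (P x y * ψ y)| := by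
          rw [h1]
          exact norm_tsum_le_tsum_norm (f := fun y : V => ψ x * (P x y * ψ y)) (hrow x)
      _ ≤ ∑' y : V, (P x y * (ψ x ^ 2 / 2) + P x y * ψ y ^ 2 / 2) := by
          refine Summable.tsum_le_tsum ?_ (hrow x)
            (((hPsum x).mul_right (ψ x ^ 2 / 2)).add ((hFy x).div_const 2))
          intro y
          have h5 : |ψ x * (P x y * ψ y)| = P x y * |ψ x * ψ y| := by
            rw [show ψ x * (P x y * ψ y) = P x y * (ψ x * ψ y) by ring, abs_mul,
              abs_of_nonneg (hPnonneg x y)]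
          rw [h5]
          calc P x y * |ψ x * ψ y| ≤ P x y * ((ψ x ^ 2 + ψ y ^ 2) / 2) :=
                mul_le_mul_of_nonneg_left (habs_le _ _) (hPnonneg x y)
            _ = P x y * (ψ x ^ 2 / 2) + P x y * ψ y ^ 2 / 2 := by ring
      _ = ψ x ^ 2 / 2 + (∑' y : V, P x y * ψ y ^ 2) / 2 := by
          rw [Summable.tsum_add ((hPsum x).mul_right (ψ x ^ 2 / 2)) ((hFy x).div_const 2),
            tsum_mul_right, tsum_div_const, hPstoch x]
          ring
  have hW : Summable fun x => ψ x * Pψ x := by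
    apply Summable.of_abs
    exact Summable.of_nonneg_of_le (fun x => abs_nonneg _) hbnd
      ((hs2.div_const 2).add (hg.div_const 2))
  -- RHS
  have hRHS : (∑' x : V, ψ x * (ψ x - Pψ x)) = S - ∑' x : V, ψ x * Pψ x := by
    have h6 : ∀ x : V, ψ x * (ψ x - Pψ x) = ψ x ^ 2 - ψ x * Pψ x := by
      intro x; ring
    rw [tsum_congr h6, Summable.tsum_sub hs2 hW, hSdef]
  rw [show (∑' y : V, P z y * ∑' σ : Γ, (ψ (σ • y) - ψ (σ • z)) ^ 2)
      = 2 * S - 2 * ∑' y : V, P z y * T y from hLHS, hU,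
    show (∑' x : V, ψ x * (ψ x - ∑' y : V, P x y * ψ y)) = ∑' x : V, ψ x * (ψ x - Pψ x) from rfl,
    hRHS]
  ring
end
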